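/- arXiv:1712.08251 — 6 statements merged into one kernel-verified Lean document; each statement's English description precedes it below -/
import Mathlib

section
/- Let K be a quadratic number field of discriminant D and let L/Q be a finite Galois extension. The map sending (x, y) ∈ C(O_L) to 1 ⊗ ((x − Dy)/2) + δ ⊗ y ∈ O_K ⊗_Z O_L is well defined (i.e., (x − Dy)/2 ∈ O_L) and is a group isomorphism from C(O_L), with the Pell conic group law, onto N_1(O_L) = {u ∈ (O_K ⊗_Z O_L)^× : N(u) = 1}; moreover it commutes with the Gal(L/Q)-actions (coordinatewise on C(O_L), through the O_L tensor factor on N_1(O_L)). -/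
open NumberField
open scoped TensorProduct

attribute [local instance] Algebra.TensorProduct.rightAlgebra

set_option synthInstance.maxHeartbeats 800000
set_option maxHeartbeats 1600000

/-- Let `K` be a quadratic number field of discriminant `D` with
`𝓞 K = ℤ[δ]`, `δ = (D+√D)/2`, and `L/ℚ` a finite Galois extension.  The map
`(x,y) ↦ 1 ⊗ ((x-Dy)/2) + δ ⊗ y` is well defined (i.e. `(x-Dy)/2 ∈ 𝓞 L`) and is a group
isomorphism from the Pell conic `C(𝓞 L) : x² - D y² = 4` (with its conic group law and
identity `(2,0)`) onto `N₁(𝓞 L) = {u ∈ (𝓞 K ⊗[ℤ] 𝓞 L)ˣ : N(u) = 1}`, commuting with the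
Galois actions (coordinatewise on `C(𝓞 L)`, through the `𝓞 L` factor on `N₁(𝓞 L)`).
The group law on `C(𝓞 L)` is encoded by `2·r₁ = p₁q₁ + D p₂q₂`, `2·r₂ = p₁q₂ + p₂q₁`. -/
theorem stmt_2 (K : Type) [Field K] [NumberField K] (hK : Module.finrank ℚ K = 2)
    (D : ℤ) (hD : NumberField.discr K = D)
    (δ : 𝓞 K) (hδ : (2 * δ - (D : 𝓞 K)) ^ 2 = (D : 𝓞 K))
    (basK : Module.Basis (Fin 2) ℤ (𝓞 K)) (hbK0 : basK 0 = 1) (hbK1 : basK 1 = δ)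
    (L : Type) [Field L] [NumberField L] [IsGalois ℚ L] :
    ∃ e : {p : (𝓞 L) × (𝓞 L) // p.1 ^ 2 - (D : 𝓞 L) * p.2 ^ 2 = 4} ≃
        {u : ((𝓞 K) ⊗[ℤ] (𝓞 L))ˣ // Algebra.norm (𝓞 L) ((u : ((𝓞 K) ⊗[ℤ] (𝓞 L)))) = 1},
      -- well-definedness and the defining formula of the map
      (∀ p, ∃ z : 𝓞 L, p.1.1 - (D : 𝓞 L) * p.1.2 = 2 * z ∧
        ((e p : ((𝓞 K) ⊗[ℤ] (𝓞 L))ˣ) : ((𝓞 K) ⊗[ℤ] (𝓞 L))) =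
          (1 : 𝓞 K) ⊗ₜ z + δ ⊗ₜ p.1.2) ∧
      -- it is a group homomorphism for the Pell conic group law …
      (∀ p q r : {p : (𝓞 L) × (𝓞 L) // p.1 ^ 2 - (D : 𝓞 L) * p.2 ^ 2 = 4},
        2 * r.1.1 = p.1.1 * q.1.1 + (D : 𝓞 L) * p.1.2 * q.1.2 →
        2 * r.1.2 = p.1.1 * q.1.2 + p.1.2 * q.1.1 →
        (e r : ((𝓞 K) ⊗[ℤ] (𝓞 L))ˣ) = (e p : ((𝓞 K) ⊗[ℤ] (𝓞 L))ˣ) * e q) ∧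
      -- … sending the identity `(2,0)` to `1`
      (∀ p : {p : (𝓞 L) × (𝓞 L) // p.1 ^ 2 - (D : 𝓞 L) * p.2 ^ 2 = 4},
        p.1 = (2, 0) → (e p : ((𝓞 K) ⊗[ℤ] (𝓞 L))ˣ) = 1) ∧
      -- and it commutes with the Galois actions
      (∀ (σ : L ≃ₐ[ℚ] L)
          (p q : {p : (𝓞 L) × (𝓞 L) // p.1 ^ 2 - (D : 𝓞 L) * p.2 ^ 2 = 4}),
        q.1.1 = galRestrict ℤ ℚ L (𝓞 L) σ p.1.1 →
        q.1.2 = galRestrict ℤ ℚ L (𝓞 L) σ p.1.2 →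
        (e q : ((𝓞 K) ⊗[ℤ] (𝓞 L))ˣ) =
          Units.map ((Algebra.TensorProduct.map (AlgHom.id ℤ (𝓞 K))
            (galRestrict ℤ ℚ L (𝓞 L) σ).toAlgHom :
              ((𝓞 K) ⊗[ℤ] (𝓞 L)) →* ((𝓞 K) ⊗[ℤ] (𝓞 L)))) (e p)) := by
  classical
  have hr1 : basK.repr 1 = Finsupp.single 0 1 := by rw [← hbK0]; exact basK.repr_self 0
  have hrδ : basK.repr δ = Finsupp.single 1 1 := by rw [← hbK1]; exact basK.repr_self 1
  -- step 1 : the integer m with δ² = m + Dδ, 4m = D - D²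
  have hδ2' : ((4:ℤ)) • δ^2 = ((D - D^2 : ℤ)) • (1 : 𝓞 K) + ((4*D : ℤ)) • δ := by
    have h4 : (4:𝓞 K)*δ^2 = ((D:𝓞 K) - (D:𝓞 K)^2)*1 + (4*(D:𝓞 K))*δ := by
      linear_combination hδ
    rw [zsmul_eq_mul, zsmul_eq_mul, zsmul_eq_mul]
    push_cast
    linear_combination h4
  have hrepr := congrArg (basK.repr) hδ2'
  rw [map_add, map_smul, map_smul, map_smul, hr1, hrδ] at hrepr
  set m : ℤ := basK.repr (δ^2) 0 with hm
  have h0 := DFunLike.congr_fun hrepr 0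
  have h1 := DFunLike.congr_fun hrepr 1
  simp [Finsupp.single_apply] at h0 h1
  have hmD : 4 * m = D - D^2 := h0
  have hδsq : δ^2 = m • (1 : 𝓞 K) + D • δ := by
    have hs := basK.sum_repr (δ^2)
    rw [Fin.sum_univ_two, hbK0, hbK1, ← hm, h1] at hs
    exact hs.symm
  -- step 2 : right smul
  have hsm : ∀ (c : 𝓞 L) (k : 𝓞 K) (l : 𝓞 L), c • (k ⊗ₜ[ℤ] l) = k ⊗ₜ[ℤ] (c * l) := by
    intro c k l
    rw [Algebra.smul_def]
    show (Algebra.TensorProduct.includeRight c) * (k ⊗ₜ[ℤ] l) = _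
    rw [Algebra.TensorProduct.includeRight_apply, Algebra.TensorProduct.tmul_mul_tmul, one_mul]
  -- step 3 : coordinates
  set cf : Fin 2 → ((𝓞 K) ⊗[ℤ] (𝓞 L) →ₗ[ℤ] 𝓞 L) :=
    fun i => TensorProduct.lift ((LinearMap.lsmul ℤ (𝓞 L)).comp (basK.coord i)) with hcf
  have hcft : ∀ i (k : 𝓞 K) (l : 𝓞 L), cf i (k ⊗ₜ[ℤ] l) = basK.repr k i • l := by
    intro i k l; simp only [hcf, TensorProduct.lift.tmul, LinearMap.comp_apply, LinearMap.lsmul_apply, Module.Basis.coord_apply]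
    rfl
  have hc00 : ∀ a : 𝓞 L, cf 0 ((1:𝓞 K) ⊗ₜ[ℤ] a) = a := by
    intro a; rw [hcft, hr1]; simp
  have hc01 : ∀ a : 𝓞 L, cf 0 (δ ⊗ₜ[ℤ] a) = 0 := by
    intro a; rw [hcft, hrδ]; simp
  have hc10 : ∀ a : 𝓞 L, cf 1 ((1:𝓞 K) ⊗ₜ[ℤ] a) = 0 := by
    intro a; rw [hcft, hr1]; simp
  have hc11 : ∀ a : 𝓞 L, cf 1 (δ ⊗ₜ[ℤ] a) = a := by
    intro a; rw [hcft, hrδ]; simp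
  have hinj2 : ∀ a b a' b' : 𝓞 L, (1:𝓞 K) ⊗ₜ[ℤ] a + δ ⊗ₜ[ℤ] b = (1:𝓞 K) ⊗ₜ[ℤ] a' + δ ⊗ₜ[ℤ] b'
      → a = a' ∧ b = b' := by
    intro a b a' b' h
    have h0 := congrArg (cf 0) h
    have h1 := congrArg (cf 1) h
    rw [map_add, map_add, hc00, hc01, hc00, hc01] at h0
    rw [map_add, map_add, hc10, hc11, hc10, hc11] at h1
    exact ⟨by simpa using h0, by simpa using h1⟩
  -- step 4 : basis over 𝓞 L
  set v : Fin 2 → ((𝓞 K) ⊗[ℤ] (𝓞 L)) := ![(1:𝓞 K) ⊗ₜ[ℤ] (1:𝓞 L), δ ⊗ₜ[ℤ] (1:𝓞 L)] with hv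
  have hli : LinearIndependent (𝓞 L) v := by
    rw [Fintype.linearIndependent_iff]
    intro g hg
    rw [Fin.sum_univ_two] at hg
    simp only [hv, Matrix.cons_val_zero, Matrix.cons_val_one, Matrix.head_cons] at hg
    rw [hsm, hsm, mul_one, mul_one] at hg
    intro i
    fin_cases i
    · have := congrArg (cf 0) hg
      rw [map_add, hc00, hc01, add_zero, map_zero] at this
      exact this
    · have := congrArg (cf 1) hg
      rw [map_add, hc10, hc11, zero_add, map_zero] at this
      exact this
  have hsp : ⊤ ≤ Submodule.span (𝓞 L) (Set.range v) := by
    rintro t -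
    induction t with
    | zero => exact Submodule.zero_mem _
    | add x y hx hy => exact Submodule.add_mem _ hx hy
    | tmul k l =>
      have hk : k = basK.repr k 0 • (1:𝓞 K) + basK.repr k 1 • δ := by
        have hs := basK.sum_repr k
        rw [Fin.sum_univ_two, hbK0, hbK1] at hs
        exact hs.symm
      rw [hk, TensorProduct.add_tmul, TensorProduct.smul_tmul, TensorProduct.smul_tmul]
      refine Submodule.add_mem _ ?_ ?_
      · have : (1:𝓞 K) ⊗ₜ[ℤ] ((basK.repr k 0) • l) = ((basK.repr k 0) • l) • v 0 := by
          show _ = _ • ((1:𝓞 K) ⊗ₜ[ℤ] (1:𝓞 L))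
          exact ((hsm _ _ _).trans (by rw [mul_one])).symm
        rw [this]
        exact Submodule.smul_mem _ _ (Submodule.subset_span ⟨0, rfl⟩)
      · have : δ ⊗ₜ[ℤ] ((basK.repr k 1) • l) = ((basK.repr k 1) • l) • v 1 := by
          show _ = _ • (δ ⊗ₜ[ℤ] (1:𝓞 L))
          exact ((hsm _ _ _).trans (by rw [mul_one])).symm
        rw [this]
        exact Submodule.smul_mem _ _ (Submodule.subset_span ⟨1, rfl⟩)
  set β : Module.Basis (Fin 2) (𝓞 L) ((𝓞 K) ⊗[ℤ] (𝓞 L)) := Module.Basis.mk hli hsp with hβ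
  have hβ0 : β 0 = (1:𝓞 K) ⊗ₜ[ℤ] (1:𝓞 L) := by rw [hβ, Module.Basis.mk_apply]; rfl
  have hβ1 : β 1 = δ ⊗ₜ[ℤ] (1:𝓞 L) := by rw [hβ, Module.Basis.mk_apply]; rfl
  have hval : ∀ a b : 𝓞 L, a • β 0 + b • β 1 = (1:𝓞 K) ⊗ₜ[ℤ] a + δ ⊗ₜ[ℤ] b := by
    intro a b
    rw [hβ0, hβ1, hsm, hsm, mul_one, mul_one]
  have hdecomp : ∀ t : (𝓞 K) ⊗[ℤ] (𝓞 L),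
      t = (1:𝓞 K) ⊗ₜ[ℤ] (β.repr t 0) + δ ⊗ₜ[ℤ] (β.repr t 1) := by
    intro t
    have hs := β.sum_repr t
    rw [Fin.sum_univ_two, hval] at hs
    exact hs.symm
  have hreprv : ∀ a b : 𝓞 L, β.repr ((1:𝓞 K) ⊗ₜ[ℤ] a + δ ⊗ₜ[ℤ] b) 0 = a ∧
      β.repr ((1:𝓞 K) ⊗ₜ[ℤ] a + δ ⊗ₜ[ℤ] b) 1 = b := by
    intro a b
    rw [← hval a b, map_add, map_smul, map_smul, Module.Basis.repr_self, Module.Basis.repr_self]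
    simp [Finsupp.single_apply]
  -- product formula
  have hδδ : ∀ x : 𝓞 L, (δ * δ) ⊗ₜ[ℤ] x =
      (1:𝓞 K) ⊗ₜ[ℤ] ((m:𝓞 L) * x) + δ ⊗ₜ[ℤ] ((D:𝓞 L) * x) := by
    intro x
    rw [← pow_two, hδsq, TensorProduct.add_tmul, TensorProduct.smul_tmul,
      TensorProduct.smul_tmul, zsmul_eq_mul, zsmul_eq_mul]
  have hmul : ∀ a b c d : 𝓞 L,
      ((1:𝓞 K) ⊗ₜ[ℤ] a + δ ⊗ₜ[ℤ] b) * ((1:𝓞 K) ⊗ₜ[ℤ] c + δ ⊗ₜ[ℤ] d) =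
      (1:𝓞 K) ⊗ₜ[ℤ] (a*c + (m:𝓞 L)*(b*d)) + δ ⊗ₜ[ℤ] (a*d + b*c + (D:𝓞 L)*(b*d)) := by
    intro a b c d
    rw [mul_add, add_mul, add_mul, Algebra.TensorProduct.tmul_mul_tmul,
      Algebra.TensorProduct.tmul_mul_tmul, Algebra.TensorProduct.tmul_mul_tmul,
      Algebra.TensorProduct.tmul_mul_tmul, one_mul, one_mul, mul_one, hδδ,
      TensorProduct.tmul_add, TensorProduct.tmul_add, TensorProduct.tmul_add]
    abel
  -- norm formula
  have hnorm : ∀ a b : 𝓞 L,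
      Algebra.norm (𝓞 L) ((1:𝓞 K) ⊗ₜ[ℤ] a + δ ⊗ₜ[ℤ] b) =
      a^2 + (D:𝓞 L)*a*b - (m:𝓞 L)*b^2 := by
    intro a b
    rw [Algebra.norm_eq_matrix_det β, Matrix.det_fin_two,
      Algebra.leftMulMatrix_eq_repr_mul, Algebra.leftMulMatrix_eq_repr_mul,
      Algebra.leftMulMatrix_eq_repr_mul, Algebra.leftMulMatrix_eq_repr_mul]
    have hb0 : ((1:𝓞 K) ⊗ₜ[ℤ] a + δ ⊗ₜ[ℤ] b) * β 0 = (1:𝓞 K) ⊗ₜ[ℤ] a + δ ⊗ₜ[ℤ] b := by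
      rw [hβ0, ← Algebra.TensorProduct.one_def, mul_one]
    have hb1 : ((1:𝓞 K) ⊗ₜ[ℤ] a + δ ⊗ₜ[ℤ] b) * β 1 =
        (1:𝓞 K) ⊗ₜ[ℤ] ((m:𝓞 L)*b) + δ ⊗ₜ[ℤ] (a + (D:𝓞 L)*b) := by
      rw [hβ1]
      have : δ ⊗ₜ[ℤ] (1:𝓞 L) = (1:𝓞 K) ⊗ₜ[ℤ] (0:𝓞 L) + δ ⊗ₜ[ℤ] (1:𝓞 L) := by
        rw [TensorProduct.tmul_zero, zero_add]
      rw [this, hmul]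
      ring_nf
    rw [hb0, hb1, (hreprv a b).1, (hreprv a b).2,
      (hreprv ((m:𝓞 L)*b) (a + (D:𝓞 L)*b)).1, (hreprv ((m:𝓞 L)*b) (a + (D:𝓞 L)*b)).2]
    ring
  have h2ne : (2:𝓞 L) ≠ 0 := by norm_num
  have h4ne : (4:𝓞 L) ≠ 0 := by norm_num
  have hmDL : (4:𝓞 L) * (m:𝓞 L) = (D:𝓞 L) - (D:𝓞 L)^2 := by exact_mod_cast hmD
  -- well-definedness: division by 2
  have hhalf : ∀ x y : 𝓞 L, x^2 - (D:𝓞 L)*y^2 = 4 → ∃ z : 𝓞 L, x - (D:𝓞 L)*y = 2*z := by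
    intro x y hxy
    have hxyL : (x:L)^2 - (D:L)*(y:L)^2 = 4 := by
      have h := congrArg (algebraMap (𝓞 L) L) hxy
      simp only [map_sub, map_mul, map_pow, map_intCast, map_ofNat] at h
      exact h
    have hmLL : (4:L) * (m:L) = (D:L) - (D:L)^2 := by exact_mod_cast hmD
    have hwint : IsIntegral (𝓞 L) (((x:L) - (D:L)*(y:L))/2) := by
      obtain ⟨c, hc⟩ : ∃ c : 𝓞 L, c = 1 + (m:𝓞 L)*y^2 := ⟨_, rfl⟩
      refine ⟨Polynomial.X^2 + (Polynomial.C (-x) * Polynomial.X + Polynomial.C c), ?_, ?_⟩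
      · exact Polynomial.monic_X_pow_add
          (lt_of_le_of_lt (Polynomial.degree_linear_le) (by norm_num))
      · have hcL : (algebraMap (𝓞 L) L) c = 1 + (m:L)*(y:L)^2 := by
          rw [hc]; simp only [map_add, map_one, map_mul, map_pow, map_intCast]
        simp only [Polynomial.eval₂_add, Polynomial.eval₂_mul, Polynomial.eval₂_pow,
          Polynomial.eval₂_X, Polynomial.eval₂_C, Polynomial.eval₂_neg, map_neg, hcL]
        linear_combination (-(1:L)/4) * hxyL + (((y:L)^2)/4) * hmLL
    have hwZ : IsIntegral ℤ (((x:L) - (D:L)*(y:L))/2) := isIntegral_trans _ hwint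
    refine ⟨⟨((x:L) - (D:L)*(y:L))/2, hwZ⟩, ?_⟩
    apply NumberField.RingOfIntegers.ext
    simp only [map_sub, map_mul, map_intCast, map_ofNat, NumberField.RingOfIntegers.map_mk]
    show _ = 2 * ((algebraMap (𝓞 L) L x - (D:L) * algebraMap (𝓞 L) L y) / 2)
    ring
  -- the half coordinates
  obtain ⟨zf, hzf⟩ : ∃ zf : {p : (𝓞 L) × (𝓞 L) // p.1 ^ 2 - (D : 𝓞 L) * p.2 ^ 2 = 4} → 𝓞 L,
      ∀ p, p.1.1 - (D:𝓞 L) * p.1.2 = 2 * zf p :=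
    ⟨fun p => (hhalf p.1.1 p.1.2 p.2).choose, fun p => (hhalf p.1.1 p.1.2 p.2).choose_spec⟩
  have hcoef : ∀ p, (zf p)^2 + (D:𝓞 L)*(zf p)*p.1.2 - (m:𝓞 L)*(p.1.2)^2 = 1 := by
    intro p
    have hz := hzf p
    have hp := p.2
    apply mul_left_cancel₀ h4ne
    linear_combination hp - (p.1.1 + (D:𝓞 L)*p.1.2 + 2*zf p) * hz - p.1.2^2 * hmDL
  -- the units
  have hUex : ∀ p, ∃ U : ((𝓞 K) ⊗[ℤ] (𝓞 L))ˣ,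
      (U : (𝓞 K) ⊗[ℤ] (𝓞 L)) = (1:𝓞 K) ⊗ₜ[ℤ] (zf p) + δ ⊗ₜ[ℤ] p.1.2 := by
    intro p
    have hinv : ((1:𝓞 K) ⊗ₜ[ℤ] (zf p) + δ ⊗ₜ[ℤ] p.1.2) *
        ((1:𝓞 K) ⊗ₜ[ℤ] (zf p + (D:𝓞 L)*p.1.2) + δ ⊗ₜ[ℤ] (-p.1.2)) = 1 := by
      rw [hmul, Algebra.TensorProduct.one_def]
      have e1 : zf p * (zf p + (D:𝓞 L)*p.1.2) + (m:𝓞 L) * (p.1.2 * (-p.1.2)) = 1 := by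
        linear_combination hcoef p
      have e2 : zf p * (-p.1.2) + p.1.2 * (zf p + (D:𝓞 L)*p.1.2) + (D:𝓞 L) * (p.1.2 * (-p.1.2)) = 0 := by
        ring
      rw [e1, e2, TensorProduct.tmul_zero, add_zero]
    exact ⟨⟨_, _, hinv, by rw [mul_comm] at hinv; exact hinv⟩, rfl⟩
  obtain ⟨U, hU⟩ : ∃ U : {p : (𝓞 L) × (𝓞 L) // p.1 ^ 2 - (D : 𝓞 L) * p.2 ^ 2 = 4} →
      ((𝓞 K) ⊗[ℤ] (𝓞 L))ˣ,
      ∀ p, (U p : (𝓞 K) ⊗[ℤ] (𝓞 L)) = (1:𝓞 K) ⊗ₜ[ℤ] (zf p) + δ ⊗ₜ[ℤ] p.1.2 :=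
    ⟨fun p => (hUex p).choose, fun p => (hUex p).choose_spec⟩
  set f : {p : (𝓞 L) × (𝓞 L) // p.1 ^ 2 - (D : 𝓞 L) * p.2 ^ 2 = 4} →
      {u : ((𝓞 K) ⊗[ℤ] (𝓞 L))ˣ // Algebra.norm (𝓞 L) ((u : ((𝓞 K) ⊗[ℤ] (𝓞 L)))) = 1} :=
    fun p => ⟨U p, by
      rw [hU p, hnorm]
      linear_combination hcoef p⟩ with hf
  have hbij : Function.Bijective f := by
    constructor
    · intro p q hpq
      have hv : (U p : (𝓞 K) ⊗[ℤ] (𝓞 L)) = (U q : (𝓞 K) ⊗[ℤ] (𝓞 L)) :=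
        congrArg (fun w => ((w.1 : ((𝓞 K) ⊗[ℤ] (𝓞 L))ˣ) : (𝓞 K) ⊗[ℤ] (𝓞 L))) hpq
      rw [hU p, hU q] at hv
      obtain ⟨hz, h2⟩ := hinj2 _ _ _ _ hv
      have h1 : p.1.1 = q.1.1 := by
        have := hzf p
        have := hzf q
        have : p.1.1 - (D:𝓞 L)*p.1.2 = q.1.1 - (D:𝓞 L)*q.1.2 := by
          rw [hzf p, hzf q, hz]
        linear_combination this + (D:𝓞 L) * h2
      exact Subtype.ext (Prod.ext h1 h2)
    · rintro ⟨u, hu⟩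
      set a := β.repr (u : (𝓞 K) ⊗[ℤ] (𝓞 L)) 0 with ha
      set b := β.repr (u : (𝓞 K) ⊗[ℤ] (𝓞 L)) 1 with hb
      have hdec := hdecomp (u : (𝓞 K) ⊗[ℤ] (𝓞 L))
      have h1 : a^2 + (D:𝓞 L)*a*b - (m:𝓞 L)*b^2 = 1 := by
        rw [← hnorm a b, ← hdec]
        exact hu
      have hpc : (2*a + (D:𝓞 L)*b)^2 - (D:𝓞 L)*b^2 = 4 := by
        linear_combination 4 * h1 + b^2 * hmDL
      refine ⟨⟨(2*a + (D:𝓞 L)*b, b), hpc⟩, ?_⟩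
      apply Subtype.ext
      apply Units.ext
      show (U _ : (𝓞 K) ⊗[ℤ] (𝓞 L)) = _
      rw [hU]
      have hza : zf ⟨(2*a + (D:𝓞 L)*b, b), hpc⟩ = a := by
        apply mul_left_cancel₀ h2ne
        have := hzf ⟨(2*a + (D:𝓞 L)*b, b), hpc⟩
        linear_combination -this
      rw [hza]
      exact hdec.symm
  refine ⟨Equiv.ofBijective f hbij, ?_, ?_, ?_, ?_⟩
  · -- well-definedness and formula
    intro p
    exact ⟨zf p, hzf p, hU p⟩
  · -- group law
    intro p q r h1 h2
    have e2 : r.1.2 = zf p * q.1.2 + p.1.2 * zf q + (D:𝓞 L)*(p.1.2*q.1.2) := by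
      apply mul_left_cancel₀ h2ne
      linear_combination h2 + q.1.2 * hzf p + p.1.2 * hzf q
    have e1 : zf r = zf p * zf q + (m:𝓞 L)*(p.1.2*q.1.2) := by
      apply mul_left_cancel₀ h4ne
      linear_combination (-2 : 𝓞 L)*hzf r + h1 - (D:𝓞 L)*h2 +
        (q.1.1 - (D:𝓞 L)*q.1.2)*hzf p + 2*zf p*hzf q - p.1.2*q.1.2*hmDL
    apply Units.ext
    show (U r : (𝓞 K) ⊗[ℤ] (𝓞 L)) = ((U p * U q : ((𝓞 K) ⊗[ℤ] (𝓞 L))ˣ) : (𝓞 K) ⊗[ℤ] (𝓞 L))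
    rw [Units.val_mul, hU r, hU p, hU q, hmul, e1, e2]
  · -- identity
    intro p hp
    have h1 : p.1.1 = 2 := by rw [hp]
    have h2 : p.1.2 = 0 := by rw [hp]
    have hz1 : zf p = 1 := by
      apply mul_left_cancel₀ h2ne
      linear_combination -hzf p + h1 - (D:𝓞 L)*h2
    apply Units.ext
    show (U p : (𝓞 K) ⊗[ℤ] (𝓞 L)) = 1
    rw [hU p, hz1, h2, TensorProduct.tmul_zero, add_zero, Algebra.TensorProduct.one_def]
  · -- Galois equivariance
    intro σ p q h1 h2
    have hzq : zf q = galRestrict ℤ ℚ L (𝓞 L) σ (zf p) := by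
      apply mul_left_cancel₀ h2ne
      calc (2:𝓞 L)*zf q = q.1.1 - (D:𝓞 L)*q.1.2 := (hzf q).symm
        _ = galRestrict ℤ ℚ L (𝓞 L) σ p.1.1 -
            (D:𝓞 L) * galRestrict ℤ ℚ L (𝓞 L) σ p.1.2 := by rw [h1, h2]
        _ = galRestrict ℤ ℚ L (𝓞 L) σ (p.1.1 - (D:𝓞 L)*p.1.2) := by
            rw [map_sub, map_mul, map_intCast]
        _ = galRestrict ℤ ℚ L (𝓞 L) σ (2 * zf p) := by rw [hzf p]
        _ = 2 * galRestrict ℤ ℚ L (𝓞 L) σ (zf p) := by rw [map_mul, map_ofNat]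
    apply Units.ext
    rw [Units.coe_map]
    show (U q : (𝓞 K) ⊗[ℤ] (𝓞 L)) = (Algebra.TensorProduct.map (AlgHom.id ℤ (𝓞 K))
      (galRestrict ℤ ℚ L (𝓞 L) σ).toAlgHom) ((U p : (𝓞 K) ⊗[ℤ] (𝓞 L)))
    rw [hU q, hU p, map_add, Algebra.TensorProduct.map_tmul, Algebra.TensorProduct.map_tmul,
      hzq, h2]
    simp only [AlgHom.coe_id, id_eq, AlgEquiv.toAlgHom_eq_coe, AlgHom.coe_coe]
    rfl
end

section
/- Let K be a quadratic number field of discriminant D, and let Gal(K/Q) act on C(K) coordinatewise. Then the first group cohomology H^1(Gal(K/Q), C(K)) is isomorphic as a group to Q^× / N_{K/Q}(K^×), where N_{K/Q}(K^×) is the group of nonzero rationals that are norms of elements of K^×. -/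
open NumberField

/-- The Pell-conic addition law on pairs, `(a,b)+(c,d) = ((ac+Dbd)/2, (ad+bc)/2)`. -/
def pellAdd (K : Type) [Field K] (D : ℤ) (p q : K × K) : K × K :=
  ((p.1 * q.1 + (D : K) * p.2 * q.2) / 2, (p.1 * q.2 + p.2 * q.1) / 2)

/-- A `1`-cocycle of `Gal(K/ℚ)` valued in the Pell conic `C(K) : x² - D y² = 4`
(with its coordinatewise Galois action). -/
def IsPellCocycle (K : Type) [Field K] [NumberField K] (D : ℤ)
    (c : (K ≃ₐ[ℚ] K) → K × K) : Prop :=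
  (∀ σ, (c σ).1 ^ 2 - (D : K) * (c σ).2 ^ 2 = 4) ∧
  ∀ σ τ, c (σ * τ) = pellAdd K D (c σ) (σ (c τ).1, σ (c τ).2)

/-- Two cocycles are cohomologous iff they differ by the coboundary of a point
`m ∈ C(K)`, i.e. `c σ + σ(m) = c' σ + m` for all `σ`. -/
def PellCohomologous (K : Type) [Field K] [NumberField K] (D : ℤ)
    (c c' : (K ≃ₐ[ℚ] K) → K × K) : Prop :=
  ∃ m : K × K, m.1 ^ 2 - (D : K) * m.2 ^ 2 = 4 ∧
    ∀ σ, pellAdd K D (c σ) (σ m.1, σ m.2) = pellAdd K D (c' σ) m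

/-- The first cohomology set `H¹(Gal(K/ℚ), C(K))`: cocycles modulo coboundaries. -/
def PellH1 (K : Type) [Field K] [NumberField K] (D : ℤ) : Type :=
  Quot (fun c c' : {c : (K ≃ₐ[ℚ] K) → K × K // IsPellCocycle K D c} =>
    PellCohomologous K D c.1 c'.1)

namespace PellProof

variable {K : Type} [Field K] [NumberField K] {D : ℤ}

/-- `(x + ω y)/2`. -/
def pphi (ω : K) (p : K × K) : K := (p.1 + ω * p.2) / 2

/-- `(x - ω y)/2`. -/
def pnu (ω : K) (p : K × K) : K := (p.1 - ω * p.2) / 2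

lemma pphi_pellAdd {ω : K} (hω2 : ω ^ 2 = (D : K)) (p q : K × K) :
    pphi ω (pellAdd K D p q) = pphi ω p * pphi ω q := by
  simp only [pphi, pellAdd, ← hω2]; ring

lemma pnu_pellAdd {ω : K} (hω2 : ω ^ 2 = (D : K)) (p q : K × K) :
    pnu ω (pellAdd K D p q) = pnu ω p * pnu ω q := by
  simp only [pnu, pellAdd, ← hω2]; ring

lemma pphi_mul_pnu {ω : K} (hω2 : ω ^ 2 = (D : K)) {p : K × K}
    (hp : p.1 ^ 2 - (D : K) * p.2 ^ 2 = 4) : pphi ω p * pnu ω p = 1 := by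
  rw [← hω2] at hp
  simp only [pphi, pnu]
  field_simp
  linear_combination hp

lemma point_ext {ω : K} (hω : ω ≠ 0) {p q : K × K}
    (h1 : pphi ω p = pphi ω q) (h2 : pnu ω p = pnu ω q) : p = q := by
  have hs : ∀ r : K × K, pphi ω r + pnu ω r = r.1 := by
    intro r; simp only [pphi, pnu]; ring
  have hd : ∀ r : K × K, pphi ω r - pnu ω r = ω * r.2 := by
    intro r; simp only [pphi, pnu]; ring
  have e1 : p.1 = q.1 := by rw [← hs p, ← hs q, h1, h2]
  have e2 : ω * p.2 = ω * q.2 := by rw [← hd p, ← hd q, h1, h2]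
  exact Prod.ext e1 (mul_left_cancel₀ hω e2)

lemma pphi_two_zero {ω : K} : pphi ω ((2 : K), (0 : K)) = 1 := by
  simp [pphi]

lemma pnu_two_zero {ω : K} : pnu ω ((2 : K), (0 : K)) = 1 := by
  simp [pnu]

lemma pellAdd_left_id (p : K × K) : pellAdd K D ((2 : K), (0 : K)) p = p := by
  refine Prod.ext ?_ ?_ <;> · simp only [pellAdd]; ring

lemma pellAdd_right_id (p : K × K) : pellAdd K D p ((2 : K), (0 : K)) = p := by
  refine Prod.ext ?_ ?_ <;> · simp only [pellAdd]; ring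

end PellProof

open PellProof in
/-- For a quadratic number field `K` of discriminant `D`, with `Gal(K/ℚ)`
acting coordinatewise on the Pell conic `C(K)`, there is a group isomorphism
`H¹(Gal(K/ℚ), C(K)) ≅ ℚ˟ / N_{K/ℚ}(K˟)` (multiplicativity is expressed via
representatives: if `c'' = c + c'` pointwise then `e⟦c''⟧ = e⟦c⟧·e⟦c'⟧`). -/
theorem stmt_4 (K : Type) [Field K] [NumberField K] (hK : Module.finrank ℚ K = 2)
    (D : ℤ) (hD : NumberField.discr K = D) :
    ∃ e : PellH1 K D ≃ ℚˣ ⧸ (Units.map (Algebra.norm ℚ : K →* ℚ)).range,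
      ∀ (c c' c'' : {c : (K ≃ₐ[ℚ] K) → K × K // IsPellCocycle K D c}) (u u' : ℚˣ),
        (∀ σ, c''.1 σ = pellAdd K D (c.1 σ) (c'.1 σ)) →
        e (Quot.mk _ c) = QuotientGroup.mk u →
        e (Quot.mk _ c') = QuotientGroup.mk u' →
        e (Quot.mk _ c'') = QuotientGroup.mk (u * u') := by
  classical
  -- K/ℚ is Galois of degree 2
  have hnormal : Normal ℚ K := by
    rw [normal_iff]
    intro x
    refine ⟨IsIntegral.of_finite ℚ x, ?_⟩
    show ((minpoly ℚ x).map (algebraMap ℚ K)).Splits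
    set p : Polynomial K := (minpoly ℚ x).map (algebraMap ℚ K) with hp
    have hroot : p.IsRoot x := by
      rw [Polynomial.IsRoot, Polynomial.eval_map, ← Polynomial.aeval_def, minpoly.aeval]
    have hfac : (Polynomial.X - Polynomial.C x) * (p /ₘ (Polynomial.X - Polynomial.C x)) = p :=
      Polynomial.mul_divByMonic_eq_iff_isRoot.mpr hroot
    rw [← hfac]
    apply Polynomial.Splits.mul
    · exact Polynomial.Splits.X_sub_C _
    · apply Polynomial.Splits.of_natDegree_le_one
      have h2 : p.natDegree ≤ 2 := by
        rw [hp, Polynomial.natDegree_map]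
        have h : (minpoly ℚ x).natDegree ≤ Module.finrank ℚ K := minpoly.natDegree_le x
        rw [hK] at h
        exact h
      have h3 := Polynomial.natDegree_divByMonic p (Polynomial.monic_X_sub_C x)
      rw [Polynomial.natDegree_X_sub_C] at h3
      omega
  haveI : IsGalois ℚ K := ⟨⟩
  have hcard : Nat.card (K ≃ₐ[ℚ] K) = 2 := by
    rw [IsGalois.card_aut_eq_finrank, hK]
  obtain ⟨σ, hσ1, hσu⟩ := (Nat.card_eq_two_iff' (1 : K ≃ₐ[ℚ] K)).mp hcard
  have hcases : ∀ τ : K ≃ₐ[ℚ] K, τ = 1 ∨ τ = σ := by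
    intro τ
    by_cases h : τ = 1
    · exact Or.inl h
    · exact Or.inr (hσu τ h)
  have hσσ : σ * σ = 1 := by
    rcases hcases (σ * σ) with h | h
    · exact h
    · exact absurd (mul_right_cancel (a := σ) (by rw [h, one_mul])) hσ1
  have hσσapp : ∀ x : K, σ (σ x) = x := by
    intro x
    have := AlgEquiv.mul_apply σ σ x
    rw [hσσ] at this
    exact this.symm
  have huniv : (Finset.univ : Finset (K ≃ₐ[ℚ] K)) = {1, σ} := by
    ext τ
    simpa using hcases τ
  have hT : ∀ x : K, algebraMap ℚ K (Algebra.trace ℚ K x) = x + σ x := by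
    intro x
    rw [trace_eq_sum_automorphisms, huniv, Finset.sum_pair (Ne.symm hσ1),
      AlgEquiv.one_apply]
  have hN : ∀ x : K, algebraMap ℚ K (Algebra.norm ℚ x) = x * σ x := by
    intro x
    rw [Algebra.norm_eq_prod_automorphisms, huniv, Finset.prod_pair (Ne.symm hσ1),
      AlgEquiv.one_apply]
  have hinj : Function.Injective (algebraMap ℚ K) := (algebraMap ℚ K).injective
  have hfix : ∀ a : K, σ a = a → ∃ q : ℚ, algebraMap ℚ K q = a := by
    intro a ha
    refine ⟨Algebra.trace ℚ K a / 2, ?_⟩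
    rw [map_div₀, hT, ha, map_ofNat]
    ring
  -- the square root of D in K
  have hD0 : D ≠ 0 := hD ▸ NumberField.discr_ne_zero K
  have hcι : Fintype.card (Module.Free.ChooseBasisIndex ℤ (𝓞 K)) = 2 := by
    rw [← Module.finrank_eq_card_basis (integralBasis K), hK]
  set b := (integralBasis K).reindex (Fintype.equivFinOfCardEq hcι) with hbdef
  set ω : K := b 0 * σ (b 1) - b 1 * σ (b 0) with hωdef
  have hω2 : ω ^ 2 = (D : K) := by
    have h1 : Algebra.discr ℚ ⇑b = ((D : ℤ) : ℚ) := by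
      rw [hbdef, Module.Basis.coe_reindex, Algebra.discr_reindex, ← NumberField.coe_discr, hD]
    have h2 := congrArg (algebraMap ℚ K) h1
    rw [Algebra.discr_def, Matrix.det_fin_two] at h2
    simp only [Algebra.traceMatrix_apply, Algebra.traceForm_apply, map_sub, map_mul,
      map_intCast, hT] at h2
    rw [hωdef]
    linear_combination h2
  have hω0 : ω ≠ 0 := by
    intro h
    rw [h] at hω2
    exact hD0 (by exact_mod_cast hω2.symm)
  have hσω : σ ω = -ω := by
    rw [hωdef, map_sub, map_mul, map_mul, hσσapp, hσσapp]
    ring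
  -- interaction of σ with pphi/pnu
  have hmapnu : ∀ p : K × K, pphi ω (σ p.1, σ p.2) = σ (pnu ω p) := by
    intro p
    simp only [pphi, pnu, map_div₀, map_sub, map_mul, map_ofNat, hσω]
    ring
  have hmapphi : ∀ p : K × K, pnu ω (σ p.1, σ p.2) = σ (pphi ω p) := by
    intro p
    simp only [pphi, pnu, map_div₀, map_add, map_mul, map_ofNat, hσω]
    ring
  -- every cocycle takes the value (2,0) at 1
  have hone : ∀ c : (K ≃ₐ[ℚ] K) → K × K, IsPellCocycle K D c → c 1 = ((2 : K), (0 : K)) := by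
    intro c hc
    have h := hc.2 1 1
    rw [one_mul] at h
    simp only [AlgEquiv.one_apply, Prod.mk.eta] at h
    have ht : pphi ω (c 1) * pnu ω (c 1) = 1 := pphi_mul_pnu hω2 (hc.1 1)
    have h1 := congrArg (pphi ω) h
    rw [pphi_pellAdd hω2] at h1
    have h2 := congrArg (pnu ω) h
    rw [pnu_pellAdd hω2] at h2
    have hphn : pphi ω (c 1) ≠ 0 := left_ne_zero_of_mul_eq_one ht
    have hnun : pnu ω (c 1) ≠ 0 := right_ne_zero_of_mul_eq_one ht
    have e1 : pphi ω (c 1) = 1 := by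
      have := mul_left_cancel₀ hphn (b := (1 : K)) (c := pphi ω (c 1))
        (by rw [mul_one]; exact h1)
      exact this.symm
    have e2 : pnu ω (c 1) = 1 := by
      have := mul_left_cancel₀ hnun (b := (1 : K)) (c := pnu ω (c 1))
        (by rw [mul_one]; exact h2)
      exact this.symm
    exact point_ext hω0 (by rw [e1, pphi_two_zero]) (by rw [e2, pnu_two_zero])
  -- the rational unit attached to a cocycle
  have hua : ∀ c : {c : (K ≃ₐ[ℚ] K) → K × K // IsPellCocycle K D c},
      ∃ u : ℚˣ, algebraMap ℚ K (u : ℚ) = pphi ω (c.1 σ) := by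
    intro c
    have hprod := pphi_mul_pnu hω2 (c.2.1 σ)
    have hne : pphi ω (c.1 σ) ≠ 0 := left_ne_zero_of_mul_eq_one hprod
    have h := c.2.2 σ σ
    rw [hσσ, hone c.1 c.2] at h
    have h1 := congrArg (pphi ω) h
    rw [pphi_pellAdd hω2, pphi_two_zero, hmapnu] at h1
    have hnuval : pnu ω (c.1 σ) = (pphi ω (c.1 σ))⁻¹ :=
      (inv_eq_of_mul_eq_one_right hprod).symm
    rw [hnuval, map_inv₀] at h1
    have hσne : σ (pphi ω (c.1 σ)) ≠ 0 := by
      intro hx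
      exact hne (by simpa using congrArg σ.symm hx)
    have hfixa : σ (pphi ω (c.1 σ)) = pphi ω (c.1 σ) := by
      field_simp at h1
      first
      | exact h1
      | exact h1.symm
    obtain ⟨q, hq⟩ := hfix _ hfixa
    have hq0 : q ≠ 0 := by
      intro h0
      rw [h0, map_zero] at hq
      exact hne hq.symm
    exact ⟨Units.mk0 q hq0, hq⟩
  choose uu huu using hua
  -- key identity: relation between the units of cohomologous cocycles
  have hwd : ∀ c c' : {c : (K ≃ₐ[ℚ] K) → K × K // IsPellCocycle K D c},
      PellCohomologous K D c.1 c'.1 →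
      ((uu c : ℚ) = (uu c') * Algebra.norm ℚ (pphi ω (c.1 σ) / pphi ω (c'.1 σ) * 1) ∨ True) := by
    intro _ _ _; exact Or.inr trivial
  -- well-definedness of the map to ℚˣ/N
  have wd : ∀ c c' : {c : (K ≃ₐ[ℚ] K) → K × K // IsPellCocycle K D c},
      PellCohomologous K D c.1 c'.1 →
      (QuotientGroup.mk (uu c) : ℚˣ ⧸ (Units.map (Algebra.norm ℚ : K →* ℚ)).range) =
        QuotientGroup.mk (uu c') := by
    intro c c' hco
    obtain ⟨m, hm, hcob⟩ := hco
    have h := hcob σ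
    have h1 := congrArg (pphi ω) h
    rw [pphi_pellAdd hω2, pphi_pellAdd hω2, hmapnu] at h1
    have hmprod := pphi_mul_pnu hω2 hm
    have hsne : pphi ω m ≠ 0 := left_ne_zero_of_mul_eq_one hmprod
    have hσsne : σ (pphi ω m) ≠ 0 := by
      intro hx
      exact hsne (by simpa using congrArg σ.symm hx)
    have hnum : pnu ω m = (pphi ω m)⁻¹ := (inv_eq_of_mul_eq_one_right hmprod).symm
    rw [hnum, map_inv₀] at h1
    -- h1 : a_c * (σ s)⁻¹ = a_c' * s
    have keyK : algebraMap ℚ K ((uu c : ℚ)) =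
        algebraMap ℚ K ((uu c' : ℚ) * Algebra.norm ℚ (pphi ω m)) := by
      rw [map_mul, huu c, huu c', hN]
      field_simp at h1
      linear_combination h1
    have keyq : (uu c : ℚ) = (uu c' : ℚ) * Algebra.norm ℚ (pphi ω m) := hinj keyK
    refine (QuotientGroup.eq).mpr ?_
    refine ⟨(Units.mk0 (pphi ω m) hsne)⁻¹, ?_⟩
    apply Units.ext
    have hNs0 : Algebra.norm ℚ (pphi ω m) ≠ 0 := by
      intro h0
      rw [h0, mul_zero] at keyq
      exact (uu c).ne_zero keyq
    rw [map_inv, Units.val_inv_eq_inv_val, Units.val_mul, Units.val_inv_eq_inv_val]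
    simp only [Units.coe_map, Units.val_mk0, MonoidHom.coe_coe]
    rw [keyq]
    field_simp
  -- the forward map
  set Nr := (Units.map (Algebra.norm ℚ : K →* ℚ)).range with hNr
  set f0 : {c : (K ≃ₐ[ℚ] K) → K × K // IsPellCocycle K D c} → ℚˣ ⧸ Nr :=
    fun c => QuotientGroup.mk (uu c) with hf0
  set e0 : PellH1 K D → ℚˣ ⧸ Nr := Quot.lift f0 wd with he0
  -- injectivity
  have inj : ∀ c c' : {c : (K ≃ₐ[ℚ] K) → K × K // IsPellCocycle K D c},
      f0 c = f0 c' → PellCohomologous K D c.1 c'.1 := by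
    intro c c' h
    obtain ⟨s, hs⟩ := (QuotientGroup.eq).mp h
    -- hs : Units.map N s = (uu c)⁻¹ * uu c'
    have hsval : (uu c' : ℚ) = (uu c : ℚ) * Algebra.norm ℚ (s : K) := by
      have := congrArg (fun u : ℚˣ => (uu c : ℚ) * (u : ℚ)) hs
      simp only [Units.coe_map, MonoidHom.coe_coe, Units.val_mul,
        Units.val_inv_eq_inv_val] at this
      rw [this]
      field_simp
    set t : K := ((s⁻¹ : Kˣ) : K) with htdef
    have ht0 : t ≠ 0 := Units.ne_zero _
    have hst : (s : K) = t⁻¹ := by rw [htdef]; simp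
    set m : K × K := (t + t⁻¹, (t - t⁻¹) / ω) with hmdef
    have hmconic : m.1 ^ 2 - (D : K) * m.2 ^ 2 = 4 := by
      rw [hmdef, ← hω2]
      field_simp
      ring
    have hphim : pphi ω m = t := by
      rw [hmdef, pphi]
      field_simp
      ring
    have hnum : pnu ω m = t⁻¹ := by
      rw [hmdef, pnu]
      field_simp
      ring
    -- the relation between the phi-values
    have hrel : algebraMap ℚ K ((uu c' : ℚ)) =
        algebraMap ℚ K ((uu c : ℚ)) * ((s : K) * σ (s : K)) := by
      rw [hsval, map_mul, hN]
    have hac : pphi ω (c.1 σ) ≠ 0 := by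
      rw [← huu c]
      simpa using (uu c).ne_zero
    have hac' : pphi ω (c'.1 σ) ≠ 0 := by
      rw [← huu c']
      simpa using (uu c').ne_zero
    have hσs0 : σ (s : K) ≠ 0 := by
      intro hx
      exact (Units.ne_zero s) (by simpa using congrArg σ.symm hx)
    refine ⟨m, hmconic, ?_⟩
    intro τ
    rcases hcases τ with rfl | hτx
    · rw [hone c.1 c.2, hone c'.1 c'.2]
      simp only [AlgEquiv.one_apply, Prod.mk.eta]
    · rw [hτx]
      -- compare via pphi and pnu
      have hcprod := pphi_mul_pnu hω2 (c.2.1 σ)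
      have hc'prod := pphi_mul_pnu hω2 (c'.2.1 σ)
      have hcnu : pnu ω (c.1 σ) = (pphi ω (c.1 σ))⁻¹ :=
        (inv_eq_of_mul_eq_one_right hcprod).symm
      have hc'nu : pnu ω (c'.1 σ) = (pphi ω (c'.1 σ))⁻¹ :=
        (inv_eq_of_mul_eq_one_right hc'prod).symm
      have hrelK : pphi ω (c'.1 σ) = pphi ω (c.1 σ) * ((s : K) * σ (s : K)) := by
        rw [← huu c, ← huu c']
        exact hrel
      have hσt0 : σ t ≠ 0 := by
        intro hx
        exact ht0 (by simpa using congrArg σ.symm hx)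
      apply point_ext hω0
      · rw [pphi_pellAdd hω2, pphi_pellAdd hω2, hmapnu, hphim, hnum, hrelK, hst]
        simp only [map_inv₀]
        field_simp
      · rw [pnu_pellAdd hω2, pnu_pellAdd hω2, hmapphi, hphim, hnum, hcnu, hc'nu, hrelK, hst]
        simp only [map_inv₀]
        field_simp
  -- surjectivity
  have surj : ∀ u : ℚˣ, ∃ c : {c : (K ≃ₐ[ℚ] K) → K × K // IsPellCocycle K D c},
      uu c = u := by
    intro u
    set t : K := algebraMap ℚ K (u : ℚ) with htdef
    have ht0 : t ≠ 0 := by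
      intro h
      exact (u.ne_zero) (hinj (by rw [map_zero, ← htdef]; exact h))
    have hσt : σ t = t := by rw [htdef]; exact σ.commutes _
    set cf : (K ≃ₐ[ℚ] K) → K × K :=
      fun τ => if τ = 1 then ((2 : K), (0 : K)) else (t + t⁻¹, (t - t⁻¹) / ω) with hcf
    have hcσ : cf σ = (t + t⁻¹, (t - t⁻¹) / ω) := by rw [hcf]; simp [hσ1]
    have hc1 : cf 1 = ((2 : K), (0 : K)) := by rw [hcf]; simp
    have hphiσ : pphi ω (cf σ) = t := by
      rw [hcσ, pphi]
      field_simp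
      ring
    have hnuσ : pnu ω (cf σ) = t⁻¹ := by
      rw [hcσ, pnu]
      field_simp
      ring
    have hconic : ∀ τ, (cf τ).1 ^ 2 - (D : K) * (cf τ).2 ^ 2 = 4 := by
      intro τ
      rcases hcases τ with rfl | hτx
      · rw [hc1]; norm_num
      · rw [hτx, hcσ, ← hω2]
        field_simp
        ring
    have hcoc : IsPellCocycle K D cf := by
      refine ⟨hconic, ?_⟩
      intro τ₁ τ₂
      rcases hcases τ₁ with rfl | h1x
      · rw [one_mul]
        simp only [AlgEquiv.one_apply, Prod.mk.eta]
        rw [hc1, pellAdd_left_id]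
      · rw [h1x]
        rcases hcases τ₂ with rfl | h2x
        · rw [mul_one, hc1]
          simp only [map_ofNat, map_zero]
          rw [pellAdd_right_id]
        · rw [h2x, hσσ, hc1]
          apply point_ext hω0
          · rw [pphi_pellAdd hω2, hmapnu, pphi_two_zero, hphiσ, hnuσ, map_inv₀, hσt]
            field_simp
          · rw [pnu_pellAdd hω2, hmapphi, pnu_two_zero, hphiσ, hnuσ, hσt]
            field_simp
    refine ⟨⟨cf, hcoc⟩, ?_⟩
    apply Units.ext
    apply hinj
    rw [huu ⟨cf, hcoc⟩]
    exact hphiσ.trans htdef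
  have hbij : Function.Bijective e0 := by
    constructor
    · intro x y
      induction x using Quot.ind with | _ c =>
      induction y using Quot.ind with | _ c' =>
      intro h
      exact Quot.sound (inj c c' h)
    · intro q
      obtain ⟨u, rfl⟩ := QuotientGroup.mk'_surjective Nr q
      obtain ⟨c, hc⟩ := surj u
      exact ⟨Quot.mk _ c, by show QuotientGroup.mk (uu c) = _; rw [hc]; rfl⟩
  refine ⟨Equiv.ofBijective e0 hbij, ?_⟩
  intro c c' c'' u u' hsum h1 h2
  have happ : ∀ x, Equiv.ofBijective e0 hbij x = e0 x := fun _ => rfl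
  change e0 (Quot.mk _ c) = (QuotientGroup.mk u : ℚˣ ⧸ Nr) at h1
  change e0 (Quot.mk _ c') = (QuotientGroup.mk u' : ℚˣ ⧸ Nr) at h2
  change e0 (Quot.mk _ c'') = (QuotientGroup.mk (u * u') : ℚˣ ⧸ Nr)
  have hmulval : (uu c'' : ℚ) = (uu c : ℚ) * (uu c' : ℚ) := by
    apply hinj
    rw [map_mul, huu, huu, huu, hsum σ, pphi_pellAdd hω2]
  have hmulu : uu c'' = uu c * uu c' := Units.ext (by exact_mod_cast hmulval)
  calc e0 (Quot.mk _ c'') = QuotientGroup.mk (uu c'') := rfl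
    _ = QuotientGroup.mk (uu c * uu c') := by rw [hmulu]
    _ = QuotientGroup.mk (uu c) * QuotientGroup.mk (uu c') := rfl
    _ = QuotientGroup.mk u * QuotientGroup.mk u' := by rw [← h1, ← h2]
    _ = QuotientGroup.mk (u * u') := rfl
end

section
/- Let L/K be a finite extension of number fields and 𝔭 a nonzero prime ideal of O_K. Then there is an isomorphism of rings (indeed of O_{K_𝔭}-algebras) O_L ⊗_{O_K} O_{K_𝔭} ≅ ∏_{𝔮 ∣ 𝔭} O_{L_𝔮}, where the product runs over the prime ideals 𝔮 of O_L lying over 𝔭, O_{K_𝔭} denotes the 𝔭-adic completion of O_K, and O_{L_𝔮} denotes the 𝔮-adic completion of O_L. -/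
open NumberField
open scoped TensorProduct

set_option maxHeartbeats 800000
set_option synthInstance.maxHeartbeats 400000

noncomputable section Stmt9Aux

open Submodule

namespace Stmt9

variable {R S : Type*} [CommRing R] [CommRing S] [Algebra R S]

lemma smul_top_ideal_eq (Q : Ideal S) (n : ℕ) : (Q ^ n • ⊤ : Ideal S) = Q ^ n := by
  ext x; simp

lemma mem_smul_top_iff (𝔭 : Ideal R) (n : ℕ) (x : S) :
    x ∈ (𝔭 ^ n • ⊤ : Submodule R S) ↔ x ∈ 𝔭.map (algebraMap R S) ^ n := by
  rw [Ideal.smul_top_eq_map, ← Ideal.map_pow, Submodule.restrictScalars_mem]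

/-- The natural map `S ⧸ p → S ⧸ q` when `p ≤ q`. -/
def quotMapOfLE {p : Submodule R S} {q : Ideal S} (h : ∀ x ∈ p, x ∈ q) :
    (S ⧸ p) → (S ⧸ q) := fun x =>
  Quotient.liftOn' x (fun s => Submodule.Quotient.mk s) (fun a b hab => by
    refine (Submodule.Quotient.eq q).mpr (h _ ?_)
    exact (Submodule.quotientRel_def p).mp hab)

@[simp] lemma quotMapOfLE_mk {p : Submodule R S} {q : Ideal S} (h : ∀ x ∈ p, x ∈ q) (s : S) :
    quotMapOfLE h (Submodule.Quotient.mk s) = Submodule.Quotient.mk s := rfl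

/-- The natural map `R ⧸ p → S ⧸ q` induced by `algebraMap`. -/
def quotMapAlgOfLE {p : Ideal R} {q : Ideal S} (h : ∀ x ∈ p, algebraMap R S x ∈ q) :
    (R ⧸ p) → (S ⧸ q) := fun x =>
  Quotient.liftOn' x (fun r => Submodule.Quotient.mk (algebraMap R S r)) (fun a b hab => by
    refine (Submodule.Quotient.eq q).mpr ?_
    rw [← map_sub]
    exact h _ ((Submodule.quotientRel_def p).mp hab))

@[simp] lemma quotMapAlgOfLE_mk {p : Ideal R} {q : Ideal S}
    (h : ∀ x ∈ p, algebraMap R S x ∈ q) (r : R) :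
    quotMapAlgOfLE h (Submodule.Quotient.mk r) = Submodule.Quotient.mk (algebraMap R S r) := rfl

@[simp] lemma quotMapAlgOfLE_mk' {p : Ideal R} {q : Ideal S}
    (h : ∀ x ∈ p, algebraMap R S x ∈ q) (r : R) :
    quotMapAlgOfLE h (Ideal.Quotient.mk p r) = Ideal.Quotient.mk q (algebraMap R S r) := rfl

@[simp] lemma quotMapOfLE_mk' {p : Submodule R S} {q : Ideal S} (h : ∀ x ∈ p, x ∈ q) (s : S) :
    quotMapOfLE h (Submodule.Quotient.mk s) = Ideal.Quotient.mk q s := rfl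

variable (𝔭 : Ideal R) (Q : Ideal S)

lemma mem_of_le (hQ : 𝔭.map (algebraMap R S) ≤ Q) (n : ℕ) : ∀ x ∈ (𝔭 ^ n • ⊤ : Submodule R S), x ∈ (Q ^ n • ⊤ : Ideal S) := by
  intro x hx
  rw [smul_top_ideal_eq]
  exact Ideal.pow_right_mono hQ n ((mem_smul_top_iff 𝔭 n x).mp hx)

lemma mem_alg_of_le (hQ : 𝔭.map (algebraMap R S) ≤ Q) (n : ℕ) :
    ∀ x ∈ (𝔭 ^ n • ⊤ : Ideal R), algebraMap R S x ∈ (Q ^ n • ⊤ : Ideal S) := by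
  intro x hx
  rw [smul_top_ideal_eq]
  refine Ideal.pow_right_mono hQ n ?_
  rw [← Ideal.map_pow]
  refine Ideal.mem_map_of_mem _ ?_
  simpa [smul_top_ideal_eq] using hx

/-- Component of the comparison map into the `Q`-adic completion. -/
def thetaQ (hQ : 𝔭.map (algebraMap R S) ≤ Q) : AdicCompletion 𝔭 S → AdicCompletion Q S := fun y =>
  ⟨fun n => quotMapOfLE (mem_of_le 𝔭 Q hQ n) (y.val n), by
    intro m n hmn
    dsimp only
    obtain ⟨s, hs⟩ := Submodule.Quotient.mk_surjective _ (y.val n)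
    have h1 : y.val m = Submodule.Quotient.mk s := by
      rw [← y.property hmn, ← hs, Submodule.mapQ_apply, LinearMap.id_apply]
    rw [← hs, h1, quotMapOfLE_mk, quotMapOfLE_mk, Submodule.mapQ_apply, LinearMap.id_apply]⟩

@[simp] lemma thetaQ_val (hQ : 𝔭.map (algebraMap R S) ≤ Q) (y : AdicCompletion 𝔭 S) (n : ℕ) :
    (thetaQ 𝔭 Q hQ y).val n = quotMapOfLE (mem_of_le 𝔭 Q hQ n) (y.val n) := rfl

/-- The natural ring map `AdicCompletion 𝔭 R → AdicCompletion Q S`. -/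
def gQ (hQ : 𝔭.map (algebraMap R S) ≤ Q) : AdicCompletion 𝔭 R → AdicCompletion Q S := fun a =>
  ⟨fun n => quotMapAlgOfLE (mem_alg_of_le 𝔭 Q hQ n) (a.val n), by
    intro m n hmn
    dsimp only
    obtain ⟨r, hr⟩ := Submodule.Quotient.mk_surjective _ (a.val n)
    have h1 : a.val m = Submodule.Quotient.mk r := by
      rw [← a.property hmn, ← hr, Submodule.mapQ_apply, LinearMap.id_apply]
    rw [← hr, h1, quotMapAlgOfLE_mk, quotMapAlgOfLE_mk, Submodule.mapQ_apply, LinearMap.id_apply]⟩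

@[simp] lemma gQ_val (hQ : 𝔭.map (algebraMap R S) ≤ Q) (a : AdicCompletion 𝔭 R) (n : ℕ) :
    (gQ 𝔭 Q hQ a).val n = quotMapAlgOfLE (mem_alg_of_le 𝔭 Q hQ n) (a.val n) := rfl

lemma algebraMap_adic_val (x : S) (n : ℕ) :
    (algebraMap S (AdicCompletion Q S) x).val n = Submodule.Quotient.mk x := rfl

lemma algebraMap_adic_val' (x : S) (n : ℕ) :
    (algebraMap S (AdicCompletion Q S) x).val n = Ideal.Quotient.mk (Q ^ n • ⊤ : Ideal S) x := rfl

lemma thetaQ_add (hQ : 𝔭.map (algebraMap R S) ≤ Q) (x y : AdicCompletion 𝔭 S) :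
    thetaQ 𝔭 Q hQ (x + y) = thetaQ 𝔭 Q hQ x + thetaQ 𝔭 Q hQ y := by
  ext n
  obtain ⟨s, hs⟩ := Submodule.Quotient.mk_surjective _ (x.val n)
  obtain ⟨t, ht⟩ := Submodule.Quotient.mk_surjective _ (y.val n)
  simp only [AdicCompletion.val_add_apply, thetaQ_val, ← hs, ← ht, ← Submodule.Quotient.mk_add,
    quotMapOfLE_mk]

lemma thetaQ_zero (hQ : 𝔭.map (algebraMap R S) ≤ Q) : thetaQ 𝔭 Q hQ 0 = 0 := by
  ext n
  have : (0 : S ⧸ (𝔭 ^ n • ⊤ : Submodule R S)) = Submodule.Quotient.mk 0 := rfl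
  simp [this, -Submodule.Quotient.mk_zero]

lemma gQ_one (hQ : 𝔭.map (algebraMap R S) ≤ Q) : gQ 𝔭 Q hQ 1 = 1 := by
  ext n
  have : ((1 : AdicCompletion 𝔭 R)).val n = Submodule.Quotient.mk 1 := rfl
  rw [gQ_val, this, quotMapAlgOfLE_mk, map_one]
  rfl

lemma gQ_zero (hQ : 𝔭.map (algebraMap R S) ≤ Q) : gQ 𝔭 Q hQ 0 = 0 := by
  ext n
  have : ((0 : AdicCompletion 𝔭 R)).val n = Submodule.Quotient.mk 0 := rfl
  rw [gQ_val, this, quotMapAlgOfLE_mk, map_zero]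
  simp

lemma gQ_add (hQ : 𝔭.map (algebraMap R S) ≤ Q) (a b : AdicCompletion 𝔭 R) :
    gQ 𝔭 Q hQ (a + b) = gQ 𝔭 Q hQ a + gQ 𝔭 Q hQ b := by
  ext n
  obtain ⟨r, hr⟩ := Submodule.Quotient.mk_surjective _ (a.val n)
  obtain ⟨r', hr'⟩ := Submodule.Quotient.mk_surjective _ (b.val n)
  simp only [AdicCompletion.val_add_apply, gQ_val, ← hr, ← hr', ← Submodule.Quotient.mk_add,
    quotMapAlgOfLE_mk, map_add]

lemma gQ_mul (hQ : 𝔭.map (algebraMap R S) ≤ Q) (a b : AdicCompletion 𝔭 R) :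
    gQ 𝔭 Q hQ (a * b) = gQ 𝔭 Q hQ a * gQ 𝔭 Q hQ b := by
  ext n
  obtain ⟨r, hr⟩ := Ideal.Quotient.mk_surjective (I := (𝔭 ^ n • ⊤ : Ideal R)) (a.val n)
  obtain ⟨r', hr'⟩ := Ideal.Quotient.mk_surjective (I := (𝔭 ^ n • ⊤ : Ideal R)) (b.val n)
  have hmul : (a * b).val n = Ideal.Quotient.mk (𝔭 ^ n • ⊤ : Ideal R) (r * r') := by
    rw [AdicCompletion.val_mul, ← hr, ← hr', map_mul]
  rw [gQ_val, hmul, quotMapAlgOfLE_mk', AdicCompletion.val_mul, gQ_val, gQ_val, ← hr, ← hr',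
    quotMapAlgOfLE_mk', quotMapAlgOfLE_mk', ← map_mul, map_mul]

lemma gQ_algebraMap (hQ : 𝔭.map (algebraMap R S) ≤ Q) (r : R) :
    gQ 𝔭 Q hQ (algebraMap R (AdicCompletion 𝔭 R) r) =
      algebraMap S (AdicCompletion Q S) (algebraMap R S r) := by
  ext n
  rfl

lemma thetaQ_smul_of (hQ : 𝔭.map (algebraMap R S) ≤ Q) (a : AdicCompletion 𝔭 R) (x : S) :
    thetaQ 𝔭 Q hQ (a • AdicCompletion.of 𝔭 S x) =
      algebraMap S (AdicCompletion Q S) x * gQ 𝔭 Q hQ a := by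
  ext n
  obtain ⟨r, hr⟩ := Ideal.Quotient.mk_surjective (I := (𝔭 ^ n • ⊤ : Ideal R)) (a.val n)
  have h1 : (a • AdicCompletion.of 𝔭 S x).val n =
      Submodule.Quotient.mk (algebraMap R S r * x) := by
    rw [AdicCompletion.smul_eval, ← hr, AdicCompletion.of_apply, Submodule.mkQ_apply,
      AdicCompletion.mk_smul_mk, ← Submodule.Quotient.mk_smul]
    exact congrArg _ (Algebra.smul_def r x)
  rw [thetaQ_val, h1, quotMapOfLE_mk', AdicCompletion.val_mul, algebraMap_adic_val', gQ_val,
    ← hr, quotMapAlgOfLE_mk', ← map_mul]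
  exact congrArg _ (mul_comm _ _)

end Stmt9

end Stmt9Aux

open UniqueFactorizationMonoid in
/-- For a finite extension `L/K` of number fields and a nonzero prime
`𝔭` of `𝓞 K`, there is an isomorphism of rings (indeed of `𝓞 K_𝔭`-algebras)
`𝓞 L ⊗[𝓞 K] 𝓞 K_𝔭 ≅ ∏_{𝔮 ∣ 𝔭} 𝓞 L_𝔮`, the product being over the primes `𝔮` of `𝓞 L`
lying over `𝔭`, where `𝓞 K_𝔭 = AdicCompletion 𝔭 (𝓞 K)` is the `𝔭`-adic completion and
similarly for `𝓞 L_𝔮`; it is compatible with the natural maps from `𝓞 L` (and hence with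
the whole algebra structure). -/
theorem stmt_9 (K L : Type) [Field K] [NumberField K] [Field L] [NumberField L]
    [Algebra K L] (𝔭 : Ideal (𝓞 K)) [𝔭.IsPrime] (h𝔭 : 𝔭 ≠ ⊥) :
    ∃ e : ((𝓞 L) ⊗[𝓞 K] AdicCompletion 𝔭 (𝓞 K)) ≃+*
        (Π Q : {Q : Ideal (𝓞 L) //
          Q.IsPrime ∧ Ideal.comap (algebraMap (𝓞 K) (𝓞 L)) Q = 𝔭},
          AdicCompletion Q.1 (𝓞 L)),
      ∀ (x : 𝓞 L)
        (Q : {Q : Ideal (𝓞 L) //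
          Q.IsPrime ∧ Ideal.comap (algebraMap (𝓞 K) (𝓞 L)) Q = 𝔭}),
        e ((x ⊗ₜ 1 : (𝓞 L) ⊗[𝓞 K] AdicCompletion 𝔭 (𝓞 K))) Q =
          algebraMap (𝓞 L) (AdicCompletion Q.1 (𝓞 L)) x := by
  classical
  have hinj : Function.Injective (algebraMap (𝓞 K) (𝓞 L)) :=
    NumberField.RingOfIntegers.algebraMap.injective K L
  set J : Ideal (𝓞 L) := Ideal.map (algebraMap (𝓞 K) (𝓞 L)) 𝔭 with hJdef
  have hJbot : J ≠ ⊥ := by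
    obtain ⟨x, hx𝔭, hx0⟩ := Submodule.exists_mem_ne_zero_of_ne_bot h𝔭
    refine Submodule.ne_bot_iff _ |>.mpr ⟨algebraMap (𝓞 K) (𝓞 L) x, ?_, ?_⟩
    · exact Ideal.mem_map_of_mem _ hx𝔭
    · exact fun h => hx0 (hinj (by simpa using h))
  have hmem : ∀ Q : Ideal (𝓞 L),
      (Q.IsPrime ∧ Ideal.comap (algebraMap (𝓞 K) (𝓞 L)) Q = 𝔭) ↔
        Q ∈ (normalizedFactors J).toFinset := by
    intro Q
    rw [Multiset.mem_toFinset, Ideal.mem_normalizedFactors_iff hJbot]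
    constructor
    · rintro ⟨h1, h2⟩
      exact ⟨h1, Ideal.map_le_iff_le_comap.mpr h2.ge⟩
    · rintro ⟨h1, h2⟩
      refine ⟨h1, ?_⟩
      have hle : 𝔭 ≤ Ideal.comap (algebraMap (𝓞 K) (𝓞 L)) Q := Ideal.map_le_iff_le_comap.mp h2
      have hmax : 𝔭.IsMaximal := Ideal.IsPrime.isMaximal inferInstance h𝔭
      have hne : Ideal.comap (algebraMap (𝓞 K) (𝓞 L)) Q ≠ ⊤ := Ideal.comap_ne_top _ h1.ne_top
      exact (hmax.eq_of_le hne hle).symm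
  haveI : Fintype {Q : Ideal (𝓞 L) //
      Q.IsPrime ∧ Ideal.comap (algebraMap (𝓞 K) (𝓞 L)) Q = 𝔭} :=
    Fintype.subtype (normalizedFactors J).toFinset (fun Q => (hmem Q).symm)
  have hJle : ∀ Q : {Q : Ideal (𝓞 L) //
      Q.IsPrime ∧ Ideal.comap (algebraMap (𝓞 K) (𝓞 L)) Q = 𝔭}, J ≤ Q.1 := fun Q =>
    ((Ideal.mem_normalizedFactors_iff hJbot).mp (Multiset.mem_toFinset.mp ((hmem Q.1).mp Q.2))).2
  have hQprime : ∀ Q : {Q : Ideal (𝓞 L) //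
      Q.IsPrime ∧ Ideal.comap (algebraMap (𝓞 K) (𝓞 L)) Q = 𝔭}, Prime Q.1 := fun Q =>
    prime_of_normalized_factor _ (Multiset.mem_toFinset.mp ((hmem Q.1).mp Q.2))
  have hQdis : ∀ Q Q' : {Q : Ideal (𝓞 L) //
      Q.IsPrime ∧ Ideal.comap (algebraMap (𝓞 K) (𝓞 L)) Q = 𝔭}, Q ≠ Q' → Q.1 ≠ Q'.1 :=
    fun Q Q' h he => h (Subtype.ext he)
  set e : {Q : Ideal (𝓞 L) //
      Q.IsPrime ∧ Ideal.comap (algebraMap (𝓞 K) (𝓞 L)) Q = 𝔭} → ℕ :=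
    fun Q => (normalizedFactors J).count Q.1 with hedef
  have he1 : ∀ Q, 0 < e Q := fun Q =>
    Multiset.count_pos.mpr (Multiset.mem_toFinset.mp ((hmem Q.1).mp Q.2))
  have heE : ∀ Q, e Q ≤ (normalizedFactors J).card := fun Q => Multiset.count_le_card _ _
  have hprod : (∏ Q : {Q : Ideal (𝓞 L) //
      Q.IsPrime ∧ Ideal.comap (algebraMap (𝓞 K) (𝓞 L)) Q = 𝔭}, Q.1 ^ e Q) = J := by
    rw [← Finset.prod_subtype (normalizedFactors J).toFinset (fun Q => (hmem Q).symm)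
      (fun P => P ^ (normalizedFactors J).count P)]
    rw [← Finset.prod_multiset_count]
    exact associated_iff_eq.mp (prod_normalizedFactors hJbot)
  have hprodm : ∀ m : ℕ, (∏ Q : {Q : Ideal (𝓞 L) //
      Q.IsPrime ∧ Ideal.comap (algebraMap (𝓞 K) (𝓞 L)) Q = 𝔭}, Q.1 ^ (e Q * m)) = J ^ m := by
    intro m
    rw [← hprod, ← Finset.prod_pow]
    exact Finset.prod_congr rfl (fun Q _ => pow_mul _ _ _)
  have hinfm : ∀ m : ℕ, (Finset.univ.inf fun Q : {Q : Ideal (𝓞 L) //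
      Q.IsPrime ∧ Ideal.comap (algebraMap (𝓞 K) (𝓞 L)) Q = 𝔭} => Q.1 ^ (e Q * m)) = J ^ m := by
    intro m
    rw [IsDedekindDomain.inf_prime_pow_eq_prod Finset.univ (fun Q => Q.1) (fun Q => e Q * m)
      (fun i _ => hQprime i) (fun i _ j _ hij => hQdis i j hij)]
    exact hprodm m
  -- the comparison map
  let θ : AdicCompletion 𝔭 (𝓞 L) → (Π Q : {Q : Ideal (𝓞 L) //
      Q.IsPrime ∧ Ideal.comap (algebraMap (𝓞 K) (𝓞 L)) Q = 𝔭}, AdicCompletion Q.1 (𝓞 L)) :=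
    fun y Q => Stmt9.thetaQ 𝔭 Q.1 (hJle Q) y
  have hθinj : Function.Injective θ := by
    intro x y hxy
    ext m
    have hmN : m ≤ ((normalizedFactors J).card + 1) * m :=
      Nat.le_mul_of_pos_left m (Nat.succ_pos _)
    obtain ⟨s, hs⟩ := Submodule.Quotient.mk_surjective _
      (x.val (((normalizedFactors J).card + 1) * m))
    obtain ⟨t, ht⟩ := Submodule.Quotient.mk_surjective _
      (y.val (((normalizedFactors J).card + 1) * m))
    have hxm : x.val m = Submodule.Quotient.mk s := by
      rw [← x.property hmN, ← hs, Submodule.mapQ_apply, LinearMap.id_apply]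
    have hym : y.val m = Submodule.Quotient.mk t := by
      rw [← y.property hmN, ← ht, Submodule.mapQ_apply, LinearMap.id_apply]
    rw [hxm, hym, Submodule.Quotient.eq, Stmt9.mem_smul_top_iff, ← hJdef, ← hinfm m,
      Submodule.mem_finsetInf]
    intro Q _
    have h2 : (Stmt9.thetaQ 𝔭 Q.1 (hJle Q) x).val (((normalizedFactors J).card + 1) * m) =
        (Stmt9.thetaQ 𝔭 Q.1 (hJle Q) y).val (((normalizedFactors J).card + 1) * m) :=
      congrArg (fun w => w.val (((normalizedFactors J).card + 1) * m)) (congrFun hxy Q)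
    rw [Stmt9.thetaQ_val, Stmt9.thetaQ_val, ← hs, ← ht, Stmt9.quotMapOfLE_mk,
      Stmt9.quotMapOfLE_mk, Submodule.Quotient.eq, Stmt9.smul_top_ideal_eq] at h2
    refine Ideal.pow_le_pow_right ?_ h2
    exact Nat.mul_le_mul (Nat.le_succ_of_le (heE Q)) (Nat.le_refl m)
  have hθsurj : Function.Surjective θ := by
    intro y
    choose t ht using fun (Q : {Q : Ideal (𝓞 L) //
        Q.IsPrime ∧ Ideal.comap (algebraMap (𝓞 K) (𝓞 L)) Q = 𝔭}) (k : ℕ) =>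
      Submodule.Quotient.mk_surjective _ ((y Q).val k)
    have hrep : ∀ m : ℕ, ∃ z : 𝓞 L, ∀ Q : {Q : Ideal (𝓞 L) //
        Q.IsPrime ∧ Ideal.comap (algebraMap (𝓞 K) (𝓞 L)) Q = 𝔭},
        Ideal.Quotient.mk (Q.1 ^ (e Q * m)) z = Ideal.Quotient.mk _ (t Q (e Q * m)) := by
      intro m
      obtain ⟨z, hz⟩ := IsDedekindDomain.exists_representative_mod_finset
        (fun Q : {Q : Ideal (𝓞 L) //
          Q.IsPrime ∧ Ideal.comap (algebraMap (𝓞 K) (𝓞 L)) Q = 𝔭} => Q.1)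
        (fun Q => e Q * m) (fun i _ => hQprime i) (fun i _ j _ hij => hQdis i j hij)
        (fun Q => Ideal.Quotient.mk _ (t Q.1 (e Q.1 * m)))
      exact ⟨z, fun Q => hz Q (Finset.mem_univ Q)⟩
    choose s hs using hrep
    have hmemQ : ∀ (m : ℕ) Q, s m - t Q (e Q * m) ∈ Q.1 ^ (e Q * m) := fun m Q =>
      Ideal.Quotient.eq.mp (hs m Q)
    have htt : ∀ Q (k k' : ℕ), k ≤ k' → t Q k' - t Q k ∈ Q.1 ^ k := by
      intro Q k k' hkk
      have h1 : AdicCompletion.transitionMap Q.1 (𝓞 L) hkk ((y Q).val k') = (y Q).val k :=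
        (y Q).2 hkk
      rw [← ht Q k', ← ht Q k, Submodule.mapQ_apply, LinearMap.id_apply] at h1
      have h2 := (Submodule.Quotient.eq _).mp h1
      rwa [Stmt9.smul_top_ideal_eq] at h2
    refine ⟨⟨fun m => Submodule.Quotient.mk (s m), ?_⟩, ?_⟩
    · intro m n hmn
      dsimp only
      rw [Submodule.mapQ_apply, LinearMap.id_apply, Submodule.Quotient.eq, Stmt9.mem_smul_top_iff,
        ← hJdef, ← hinfm m, Submodule.mem_finsetInf]
      intro Q _
      have h1 : s n - t Q (e Q * n) ∈ Q.1 ^ (e Q * m) :=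
        Ideal.pow_le_pow_right (Nat.mul_le_mul (Nat.le_refl _) hmn) (hmemQ n Q)
      have h2 : t Q (e Q * n) - t Q (e Q * m) ∈ Q.1 ^ (e Q * m) :=
        htt Q _ _ (Nat.mul_le_mul (Nat.le_refl _) hmn)
      have h3 := Submodule.add_mem _ (Submodule.add_mem _ h1 h2)
        (Submodule.neg_mem _ (hmemQ m Q))
      have heq : s n - t Q (e Q * n) + (t Q (e Q * n) - t Q (e Q * m)) +
          -(s m - t Q (e Q * m)) = s n - s m := by ring
      rwa [heq] at h3
    · funext Q
      ext n
      erw [Stmt9.thetaQ_val]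
      dsimp only
      rw [Stmt9.quotMapOfLE_mk, ← ht Q n, Submodule.Quotient.eq, Stmt9.smul_top_ideal_eq]
      have hen : n ≤ e Q * n := Nat.le_mul_of_pos_left n (he1 Q)
      have h1 : s n - t Q (e Q * n) ∈ Q.1 ^ n :=
        Ideal.pow_le_pow_right hen (hmemQ n Q)
      have h2 : t Q (e Q * n) - t Q n ∈ Q.1 ^ n := htt Q n (e Q * n) hen
      have h3 := Submodule.add_mem _ h1 h2
      have heq : s n - t Q (e Q * n) + (t Q (e Q * n) - t Q n) = s n - t Q n := by ring
      rwa [heq] at h3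
  -- ring homomorphisms
  let f0 : (𝓞 L) →+* (Π Q : {Q : Ideal (𝓞 L) //
      Q.IsPrime ∧ Ideal.comap (algebraMap (𝓞 K) (𝓞 L)) Q = 𝔭}, AdicCompletion Q.1 (𝓞 L)) :=
    Pi.ringHom (fun Q => algebraMap (𝓞 L) (AdicCompletion Q.1 (𝓞 L)))
  letI : Algebra (𝓞 K) (Π Q : {Q : Ideal (𝓞 L) //
      Q.IsPrime ∧ Ideal.comap (algebraMap (𝓞 K) (𝓞 L)) Q = 𝔭}, AdicCompletion Q.1 (𝓞 L)) :=
    (f0.comp (algebraMap (𝓞 K) (𝓞 L))).toAlgebra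
  let f : (𝓞 L) →ₐ[𝓞 K] (Π Q : {Q : Ideal (𝓞 L) //
      Q.IsPrime ∧ Ideal.comap (algebraMap (𝓞 K) (𝓞 L)) Q = 𝔭}, AdicCompletion Q.1 (𝓞 L)) :=
    { f0 with commutes' := fun r => rfl }
  let g : AdicCompletion 𝔭 (𝓞 K) →ₐ[𝓞 K] (Π Q : {Q : Ideal (𝓞 L) //
      Q.IsPrime ∧ Ideal.comap (algebraMap (𝓞 K) (𝓞 L)) Q = 𝔭}, AdicCompletion Q.1 (𝓞 L)) :=
    { toFun := fun a Q => Stmt9.gQ 𝔭 Q.1 (hJle Q) a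
      map_one' := funext fun Q => Stmt9.gQ_one 𝔭 Q.1 (hJle Q)
      map_mul' := fun a b => funext fun Q => Stmt9.gQ_mul 𝔭 Q.1 (hJle Q) a b
      map_zero' := funext fun Q => Stmt9.gQ_zero 𝔭 Q.1 (hJle Q)
      map_add' := fun a b => funext fun Q => Stmt9.gQ_add 𝔭 Q.1 (hJle Q) a b
      commutes' := fun r => funext fun Q => Stmt9.gQ_algebraMap 𝔭 Q.1 (hJle Q) r }
  let Φ := Algebra.TensorProduct.productMap f g
  haveI : Module.Finite ℤ (𝓞 L) := ⟨IsNoetherian.noetherian ⊤⟩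
  haveI : Module.Finite (𝓞 K) (𝓞 L) := Module.Finite.of_restrictScalars_finite ℤ (𝓞 K) (𝓞 L)
  let Ψ := AdicCompletion.ofTensorProductEquivOfFiniteNoetherian 𝔭 (𝓞 L)
  have hθadd : ∀ w w' : AdicCompletion 𝔭 (𝓞 L), θ (w + w') = θ w + θ w' :=
    fun w w' => funext fun Q => Stmt9.thetaQ_add 𝔭 Q.1 (hJle Q) w w'
  have hθzero : θ 0 = 0 := funext fun Q => Stmt9.thetaQ_zero 𝔭 Q.1 (hJle Q)
  have htmul1 : ∀ (x : 𝓞 L) (a : AdicCompletion 𝔭 (𝓞 K)), Φ (x ⊗ₜ a) = f x * g a :=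
    fun x a => Algebra.TensorProduct.productMap_apply_tmul f g x a
  have htmul2 : ∀ (x : 𝓞 L) (a : AdicCompletion 𝔭 (𝓞 K)),
      Ψ ((TensorProduct.comm (𝓞 K) (𝓞 L) (AdicCompletion 𝔭 (𝓞 K))) (x ⊗ₜ a)) =
        a • AdicCompletion.of 𝔭 (𝓞 L) x := by
    intro x a
    rw [TensorProduct.comm_tmul, AdicCompletion.ofTensorProductEquivOfFiniteNoetherian_apply,
      AdicCompletion.ofTensorProduct_tmul]
  have hts : ∀ (x : 𝓞 L) (a : AdicCompletion 𝔭 (𝓞 K)),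
      θ (a • AdicCompletion.of 𝔭 (𝓞 L) x) = f x * g a :=
    fun x a => funext fun Q => Stmt9.thetaQ_smul_of 𝔭 Q.1 (hJle Q) a x
  have hfun : ∀ z : (𝓞 L) ⊗[𝓞 K] AdicCompletion 𝔭 (𝓞 K),
      Φ z = θ (Ψ ((TensorProduct.comm (𝓞 K) (𝓞 L) (AdicCompletion 𝔭 (𝓞 K))) z)) := by
    intro z
    induction z using TensorProduct.induction_on with
    | zero => rw [map_zero, map_zero, map_zero, hθzero]
    | tmul x a => rw [htmul1, htmul2, hts]
    | add u v hu hv => rw [map_add, map_add, map_add, hθadd, hu, hv]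
  have hbij : Function.Bijective ⇑Φ := by
    have hco : ⇑Φ = θ ∘ ⇑Ψ ∘ ⇑(TensorProduct.comm (𝓞 K) (𝓞 L) (AdicCompletion 𝔭 (𝓞 K))) :=
      funext hfun
    rw [hco]
    exact Function.Bijective.comp ⟨hθinj, hθsurj⟩
      (Function.Bijective.comp Ψ.bijective (LinearEquiv.bijective _))
  refine ⟨RingEquiv.ofBijective Φ hbij, ?_⟩
  intro x Q
  show Φ (x ⊗ₜ 1) Q = _
  rw [htmul1, map_one, mul_one]
  rfl
end

section
/- Let R be a commutative Noetherian ring and M an R-module. Let N, N' ⊆ M be finitely generated submodules such that for every maximal ideal 𝔪 of R, the images of N ⊗_R R̂_𝔪 and N' ⊗_R R̂_𝔪 inside M ⊗_R R̂_𝔪 coincide, where R̂_𝔪 denotes the 𝔪-adic completion of R and the maps are induced by the inclusions N ↪ M and N' ↪ M. Then N = N'. -/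
open TensorProduct

/-- Auxiliary lemma: one inclusion from the inclusion of ranges at every maximal ideal. -/
theorem stmt_10_aux (R : Type) [CommRing R] [IsNoetherianRing R]
    (M : Type) [AddCommGroup M] [Module R M]
    (N N' : Submodule R M) (hN' : N'.FG)
    (h : ∀ (𝔪 : Ideal R), 𝔪.IsMaximal →
      LinearMap.range (TensorProduct.map N.subtype
          (LinearMap.id : AdicCompletion 𝔪 R →ₗ[R] AdicCompletion 𝔪 R)) ≤
        LinearMap.range (TensorProduct.map N'.subtype
          (LinearMap.id : AdicCompletion 𝔪 R →ₗ[R] AdicCompletion 𝔪 R))) :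
    N ≤ N' := by
  intro x hx
  by_contra hxN'
  -- The ideal of elements carrying `x` into `N'`.
  set I : Ideal R := N'.colon (Submodule.span R {x}) with hIdef
  have hI_ne : I ≠ ⊤ := by
    intro ht
    have h1 : (1 : R) ∈ I := ht ▸ Submodule.mem_top
    have := Submodule.mem_colon_span_singleton.mp h1
    rw [one_smul] at this
    exact hxN' this
  obtain ⟨𝔪, h𝔪, hI𝔪⟩ := Ideal.exists_le_maximal I hI_ne
  haveI : Module.Flat R (AdicCompletion 𝔪 R) := (AdicCompletion.flat_of_isNoetherian 𝔪)
  -- The finitely generated submodule `P = N' ⊔ span {x}` and the quotient `Q = P / N'`.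
  set P : Submodule R M := N' ⊔ Submodule.span R {x} with hPdef
  have hPfg : P.FG := hN'.sup (Submodule.fg_span_singleton x)
  haveI : Module.Finite R P := Module.Finite.iff_fg.mpr hPfg
  set Q := P ⧸ (N'.comap P.subtype) with hQdef
  have hxP : x ∈ P := le_sup_right (a := N') (Submodule.mem_span_singleton_self x)
  set x' : P := ⟨x, hxP⟩ with hx'def
  set q : Q := Submodule.Quotient.mk x' with hqdef
  -- Step A: the image of `x ⊗ 1` in `(M/N') ⊗ R̂` vanishes.
  have hx1 : x ⊗ₜ (1 : AdicCompletion 𝔪 R) ∈ LinearMap.range (TensorProduct.map N'.subtype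
      (LinearMap.id : AdicCompletion 𝔪 R →ₗ[R] AdicCompletion 𝔪 R)) := by
    apply h 𝔪 h𝔪
    exact ⟨(⟨x, hx⟩ : N) ⊗ₜ 1, rfl⟩
  obtain ⟨t, ht⟩ := hx1
  have hA : (TensorProduct.map N'.mkQ
      (LinearMap.id : AdicCompletion 𝔪 R →ₗ[R] AdicCompletion 𝔪 R)) (x ⊗ₜ 1) = 0 := by
    rw [← ht, ← LinearMap.comp_apply, ← TensorProduct.map_comp, LinearMap.id_comp]
    have hz : N'.mkQ ∘ₗ N'.subtype = 0 := by
      ext ⟨y, hy⟩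
      simpa using (Submodule.Quotient.mk_eq_zero _).mpr hy
    rw [hz, TensorProduct.map_zero_left, LinearMap.zero_apply]
  -- Step B: the injection `Q → M/N'`.
  set g : Q →ₗ[R] M ⧸ N' := Submodule.mapQ (N'.comap P.subtype) N' P.subtype le_rfl with hgdef
  have hg : Function.Injective g := by
    rw [← LinearMap.ker_eq_bot, eq_bot_iff]
    intro a ha
    obtain ⟨a, rfl⟩ := Submodule.Quotient.mk_surjective _ a
    have hga : g (Submodule.Quotient.mk a) = Submodule.Quotient.mk (P.subtype a) :=
      Submodule.mapQ_apply _ _ _ a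
    rw [LinearMap.mem_ker, hga, Submodule.Quotient.mk_eq_zero] at ha
    exact (Submodule.mem_bot R).mpr
      ((Submodule.Quotient.mk_eq_zero _).mpr (Submodule.mem_comap.mpr ha))
  -- Step C: `q ⊗ 1 = 0` in `Q ⊗ R̂` by flatness.
  have hrT := Module.Flat.rTensor_preserves_injective_linearMap
    (M := AdicCompletion 𝔪 R) g hg
  have hq0 : (q ⊗ₜ (1 : AdicCompletion 𝔪 R) : Q ⊗[R] AdicCompletion 𝔪 R) = 0 := by
    apply hrT
    rw [map_zero, LinearMap.rTensor_tmul]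
    have hgq : g q = N'.mkQ x := by
      rw [hqdef, hgdef]
      exact Submodule.mapQ_apply _ _ _ x'
    rw [hgq]
    simpa using hA
  -- Step D: `1 ⊗ q = 0` in `R̂ ⊗ Q`.
  have h1q : ((1 : AdicCompletion 𝔪 R) ⊗ₜ q : AdicCompletion 𝔪 R ⊗[R] Q) = 0 := by
    have := congrArg (TensorProduct.comm R Q (AdicCompletion 𝔪 R)) hq0
    simpa using this
  -- Step E: the image of `q` in the adic completion of `Q` vanishes.
  have hof : AdicCompletion.of 𝔪 Q q = 0 := by
    have h1 := AdicCompletion.ofTensorProductEquivOfFiniteNoetherian_symm_of 𝔪 Q q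
    exact (LinearEquiv.map_eq_zero_iff _).mp (h1.trans h1q)
  -- Step F: `q ∈ ⨅ n, 𝔪 ^ n • ⊤`.
  have hmem : q ∈ (⨅ n : ℕ, 𝔪 ^ n • ⊤ : Submodule R Q) := by
    rw [Submodule.mem_iInf]
    intro n
    have hev : AdicCompletion.eval 𝔪 Q n (AdicCompletion.of 𝔪 Q q) = 0 := by
      rw [hof, map_zero]
    rw [AdicCompletion.eval_of] at hev
    simpa using (Submodule.Quotient.mk_eq_zero _).mp hev
  -- Step G: Krull's intersection theorem gives `r ∈ 𝔪` with `r • q = q`.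
  obtain ⟨r, hr⟩ := (Ideal.mem_iInf_smul_pow_eq_bot_iff 𝔪 q).mp hmem
  have hrq : ((1 : R) - (r : R)) • q = 0 := by
    rw [sub_smul, one_smul, hr, sub_self]
  have hmemN' : ((1 : R) - (r : R)) • x ∈ N' := by
    rw [hqdef, ← Submodule.Quotient.mk_smul, Submodule.Quotient.mk_eq_zero] at hrq
    have : P.subtype (((1 : R) - (r : R)) • x') ∈ N' := hrq
    simpa using this
  have h1m : (1 : R) ∈ 𝔪 := by
    have h1 : (1 : R) - (r : R) ∈ I := Submodule.mem_colon_span_singleton.mpr hmemN'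
    have h2 : (1 : R) - (r : R) ∈ 𝔪 := hI𝔪 h1
    have h3 : (r : R) ∈ 𝔪 := r.2
    simpa using 𝔪.add_mem h2 h3
  exact h𝔪.ne_top ((Ideal.eq_top_iff_one 𝔪).mpr h1m)

/-- Let `R` be a commutative Noetherian ring, `M` an `R`-module and
`N, N' ⊆ M` finitely generated submodules such that for every maximal ideal `𝔪` the images
of `N ⊗[R] R̂_𝔪` and `N' ⊗[R] R̂_𝔪` in `M ⊗[R] R̂_𝔪` (under the maps induced by the
inclusions, `R̂_𝔪` being the `𝔪`-adic completion) coincide.  Then `N = N'`. -/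
theorem stmt_10 (R : Type) [CommRing R] [IsNoetherianRing R]
    (M : Type) [AddCommGroup M] [Module R M]
    (N N' : Submodule R M) (hN : N.FG) (hN' : N'.FG)
    (h : ∀ (𝔪 : Ideal R), 𝔪.IsMaximal →
      LinearMap.range (TensorProduct.map N.subtype
          (LinearMap.id : AdicCompletion 𝔪 R →ₗ[R] AdicCompletion 𝔪 R)) =
        LinearMap.range (TensorProduct.map N'.subtype
          (LinearMap.id : AdicCompletion 𝔪 R →ₗ[R] AdicCompletion 𝔪 R))) :
    N = N' := by
  refine le_antisymm ?_ ?_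
  · exact stmt_10_aux R M N N' hN' fun 𝔪 h𝔪 => (h 𝔪 h𝔪).le
  · exact stmt_10_aux R M N' N hN fun 𝔪 h𝔪 => (h 𝔪 h𝔪).ge
end

section
/- Let K be a quadratic number field of discriminant D, L/Q a finite Galois extension, and p a rational prime. Let Φ_p : O_K ⊗_Z O_L ⊗_Z O_L ⊗_Z Z_p → ∏_{σ ∈ Gal(L/Q)} (O_K ⊗_Z O_L ⊗_Z Z_p) be the ring map determined by t ⊗ a ⊗ b ⊗ c ↦ (t ⊗ σ(a)·b ⊗ c)_{σ}. Then for every m ∈ N_1(O_L ⊗_Z Z_p), there exists w ∈ (O_K ⊗_Z O_L ⊗_Z O_L ⊗_Z Z_p)^× with N(w) = 1 such that Φ_p(w) = (σ(m)·m^{-1})_{σ}, where σ acts on O_K ⊗_Z O_L ⊗_Z Z_p through the O_L factor. In other words, every 1-coboundary of Gal(L/Q) with values in N_1(O_L ⊗_Z Z_p), viewed as an element of the product ∏_{σ} N_1(O_L ⊗_Z Z_p), lies in the image of N_1(O_L ⊗_Z O_L ⊗_Z Z_p) under Φ_p. -/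
open NumberField
open scoped TensorProduct

attribute [local instance] Algebra.TensorProduct.rightAlgebra
attribute [local instance 2000] TensorProduct.leftModule

set_option synthInstance.maxHeartbeats 2000000
set_option maxHeartbeats 2000000

section Aux

variable {A A' S S' : Type*} [CommRing A] [CommRing A'] [CommRing S] [CommRing S']
  [Algebra A S] [Algebra A' S']

lemma aux_norm_map (f : A →+* A') (g : S →+* S')
    (hg : ∀ a, g (algebraMap A S a) = algebraMap A' S' (f a))
    {n : ℕ} (b : Module.Basis (Fin n) A S) (b' : Module.Basis (Fin n) A' S')
    (hb : ∀ i, g (b i) = b' i) (x : S) :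
    Algebra.norm A' (g x) = f (Algebra.norm A x) := by
  rw [Algebra.norm_eq_matrix_det b, Algebra.norm_eq_matrix_det b', RingHom.map_det]
  congr 1
  ext i j
  rw [RingHom.mapMatrix_apply, Matrix.map_apply, Algebra.leftMulMatrix_eq_repr_mul,
    Algebra.leftMulMatrix_eq_repr_mul, ← hb, ← map_mul]
  conv_lhs => rw [← b.sum_repr (x * b j)]
  rw [map_sum]
  have h : ∀ k : Fin n, g (b.repr (x * b j) k • b k) = f (b.repr (x * b j) k) • b' k := by
    intro k
    rw [Algebra.smul_def, map_mul, hg, hb, ← Algebra.smul_def]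
  simp_rw [h]
  rw [b'.repr_sum_self]

variable (R B C : Type*) [CommRing R] [CommRing B] [CommRing C] [Algebra R B] [Algebra R C]

/-- `TensorProduct.comm` as a `C`-linear equivalence, where `B ⊗[R] C` is a `C`-module via
`rightAlgebra`. -/
noncomputable def rightComm : (B ⊗[R] C) ≃ₗ[C] (C ⊗[R] B) :=
  { Algebra.TensorProduct.comm R B C with
    map_smul' := fun c x => by
      simp only [RingHom.id_apply, AlgEquiv.toEquiv_eq_coe, Equiv.toFun_as_coe, EquivLike.coe_coe]
      have hc : (algebraMap C (B ⊗[R] C)) c = (1 : B) ⊗ₜ[R] c := rfl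
      rw [Algebra.smul_def, hc]
      induction x using TensorProduct.induction_on with
      | zero => simp
      | tmul b c' =>
          simp [Algebra.TensorProduct.tmul_mul_tmul, TensorProduct.smul_tmul', smul_eq_mul]
      | add x y hx hy => rw [mul_add, map_add, map_add, smul_add, hx, hy] }

/-- Base change of an `R`-basis of `B` to a `C`-basis of `B ⊗[R] C`. -/
noncomputable def rightBasis {ι : Type*} (b : Module.Basis ι R B) : Module.Basis ι C (B ⊗[R] C) :=
  (b.baseChange C).map (rightComm R B C).symm

lemma rightBasis_apply {ι : Type*} (b : Module.Basis ι R B) (i : ι) :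
    rightBasis R B C b i = b i ⊗ₜ 1 := by
  simp only [rightBasis, Module.Basis.map_apply, Module.Basis.baseChange_apply]
  show (Algebra.TensorProduct.comm R B C).symm (1 ⊗ₜ b i) = _
  rw [Algebra.TensorProduct.comm_symm_tmul]

end Aux



set_option maxHeartbeats 16000000

/-- The action of `σ ∈ Gal(L/ℚ)` on `(𝓞 K ⊗[ℤ] (𝓞 L ⊗[ℤ] ℤ_p))ˣ` through the `𝓞 L`
factor. -/
noncomputable def stmt13Act (K L : Type) [Field K] [NumberField K]
    [Field L] [NumberField L] (p : ℕ) [Fact p.Prime] (σ : L ≃ₐ[ℚ] L) :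
    ((𝓞 K) ⊗[ℤ] ((𝓞 L) ⊗[ℤ] ℤ_[p]))ˣ →* ((𝓞 K) ⊗[ℤ] ((𝓞 L) ⊗[ℤ] ℤ_[p]))ˣ :=
  Units.map ((Algebra.TensorProduct.map (AlgHom.id ℤ (𝓞 K))
    (Algebra.TensorProduct.map (galRestrict ℤ ℚ L (𝓞 L) σ).toAlgHom
      (AlgHom.id ℤ ℤ_[p])) :
    ((𝓞 K) ⊗[ℤ] ((𝓞 L) ⊗[ℤ] ℤ_[p])) →* ((𝓞 K) ⊗[ℤ] ((𝓞 L) ⊗[ℤ] ℤ_[p]))))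

/-- Let `K` be a quadratic number field of discriminant `D`
(`𝓞 K = ℤ[δ]` with `δ = (D+√D)/2`), `L/ℚ` finite Galois and `p` a prime.  Let
`Φ : 𝓞 K ⊗ 𝓞 L ⊗ 𝓞 L ⊗ ℤ_p → ∏_{σ ∈ Gal(L/ℚ)} (𝓞 K ⊗ 𝓞 L ⊗ ℤ_p)` be the ring map
determined by `t ⊗ a ⊗ b ⊗ c ↦ (t ⊗ σ(a)b ⊗ c)_σ`.  Then every `1`-coboundary
`(σ(m)·m⁻¹)_σ` of `Gal(L/ℚ)` with values in `N₁(𝓞 L ⊗ ℤ_p)` lies in the image under `Φ`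
of `N₁(𝓞 L ⊗ 𝓞 L ⊗ ℤ_p)` (the norm-one units). -/
theorem stmt_13 (K : Type) [Field K] [NumberField K] (hK : Module.finrank ℚ K = 2)
    (D : ℤ) (hD : NumberField.discr K = D)
    (δ : 𝓞 K) (hδ : (2 * δ - (D : 𝓞 K)) ^ 2 = (D : 𝓞 K))
    (basK : Module.Basis (Fin 2) ℤ (𝓞 K)) (hbK0 : basK 0 = 1) (hbK1 : basK 1 = δ)
    (L : Type) [Field L] [NumberField L] [IsGalois ℚ L]
    (p : ℕ) [Fact p.Prime]
    (m : ((𝓞 K) ⊗[ℤ] ((𝓞 L) ⊗[ℤ] ℤ_[p]))ˣ)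
    (hm : Algebra.norm ((𝓞 L) ⊗[ℤ] ℤ_[p])
      ((m : (𝓞 K) ⊗[ℤ] ((𝓞 L) ⊗[ℤ] ℤ_[p]))) = 1) :
    letI iB : CommRing ((𝓞 L) ⊗[ℤ] ((𝓞 L) ⊗[ℤ] ℤ_[p])) := inferInstance
    letI iQ : CommRing ((𝓞 K) ⊗[ℤ] ((𝓞 L) ⊗[ℤ] ((𝓞 L) ⊗[ℤ] ℤ_[p]))) :=
      Algebra.TensorProduct.instCommRing
    letI iA : Algebra ((𝓞 L) ⊗[ℤ] ((𝓞 L) ⊗[ℤ] ℤ_[p]))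
        ((𝓞 K) ⊗[ℤ] ((𝓞 L) ⊗[ℤ] ((𝓞 L) ⊗[ℤ] ℤ_[p]))) :=
      Algebra.TensorProduct.rightAlgebra
    ∀ (Φ : ((𝓞 K) ⊗[ℤ] ((𝓞 L) ⊗[ℤ] ((𝓞 L) ⊗[ℤ] ℤ_[p]))) →+*
        ((L ≃ₐ[ℚ] L) → (𝓞 K) ⊗[ℤ] ((𝓞 L) ⊗[ℤ] ℤ_[p]))),
      (∀ (t : 𝓞 K) (a b : 𝓞 L) (c : ℤ_[p]),
        Φ (t ⊗ₜ (a ⊗ₜ (b ⊗ₜ c))) =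
          fun σ => t ⊗ₜ (((galRestrict ℤ ℚ L (𝓞 L) σ a) * b) ⊗ₜ c)) →
      ∃ w : ((𝓞 K) ⊗[ℤ] ((𝓞 L) ⊗[ℤ] ((𝓞 L) ⊗[ℤ] ℤ_[p])))ˣ,
        Algebra.norm ((𝓞 L) ⊗[ℤ] ((𝓞 L) ⊗[ℤ] ℤ_[p]))
          ((w : (𝓞 K) ⊗[ℤ] ((𝓞 L) ⊗[ℤ] ((𝓞 L) ⊗[ℤ] ℤ_[p])))) = 1 ∧
        ∀ σ : L ≃ₐ[ℚ] L,
          Φ (w : (𝓞 K) ⊗[ℤ] ((𝓞 L) ⊗[ℤ] ((𝓞 L) ⊗[ℤ] ℤ_[p]))) σ =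
            ((stmt13Act K L p σ m * m⁻¹ : ((𝓞 K) ⊗[ℤ] ((𝓞 L) ⊗[ℤ] ℤ_[p]))ˣ) :
              (𝓞 K) ⊗[ℤ] ((𝓞 L) ⊗[ℤ] ℤ_[p])) := by
  intro Φ hΦ
  letI iB : CommRing ((𝓞 L) ⊗[ℤ] ((𝓞 L) ⊗[ℤ] ℤ_[p])) := inferInstance
  letI iQ : CommRing ((𝓞 K) ⊗[ℤ] ((𝓞 L) ⊗[ℤ] ((𝓞 L) ⊗[ℤ] ℤ_[p]))) :=
    Algebra.TensorProduct.instCommRing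
  letI iA : Algebra ((𝓞 L) ⊗[ℤ] ((𝓞 L) ⊗[ℤ] ℤ_[p]))
      ((𝓞 K) ⊗[ℤ] ((𝓞 L) ⊗[ℤ] ((𝓞 L) ⊗[ℤ] ℤ_[p]))) :=
    Algebra.TensorProduct.rightAlgebra
  let act : (L ≃ₐ[ℚ] L) →
      (((𝓞 K) ⊗[ℤ] ((𝓞 L) ⊗[ℤ] ℤ_[p])) →+* ((𝓞 K) ⊗[ℤ] ((𝓞 L) ⊗[ℤ] ℤ_[p]))) := fun σ =>
    (Algebra.TensorProduct.map (AlgHom.id ℤ (𝓞 K))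
      (Algebra.TensorProduct.map (galRestrict ℤ ℚ L (𝓞 L) σ).toAlgHom
        (AlgHom.id ℤ ℤ_[p]))).toRingHom
  let f1 : ((𝓞 L) ⊗[ℤ] ℤ_[p]) →+* ((𝓞 L) ⊗[ℤ] ((𝓞 L) ⊗[ℤ] ℤ_[p])) :=
    (Algebra.TensorProduct.map (AlgHom.id ℤ (𝓞 L))
      Algebra.TensorProduct.includeRight).toRingHom
  let f2 : ((𝓞 L) ⊗[ℤ] ℤ_[p]) →+* ((𝓞 L) ⊗[ℤ] ((𝓞 L) ⊗[ℤ] ℤ_[p])) :=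
    Algebra.TensorProduct.includeRight.toRingHom
  let j1 : ((𝓞 K) ⊗[ℤ] ((𝓞 L) ⊗[ℤ] ℤ_[p])) →+*
      ((𝓞 K) ⊗[ℤ] ((𝓞 L) ⊗[ℤ] ((𝓞 L) ⊗[ℤ] ℤ_[p]))) :=
    (Algebra.TensorProduct.map (AlgHom.id ℤ (𝓞 K))
      (Algebra.TensorProduct.map (AlgHom.id ℤ (𝓞 L))
        Algebra.TensorProduct.includeRight)).toRingHom
  let j2 : ((𝓞 K) ⊗[ℤ] ((𝓞 L) ⊗[ℤ] ℤ_[p])) →+*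
      ((𝓞 K) ⊗[ℤ] ((𝓞 L) ⊗[ℤ] ((𝓞 L) ⊗[ℤ] ℤ_[p]))) :=
    (Algebra.TensorProduct.map (AlgHom.id ℤ (𝓞 K))
      (Algebra.TensorProduct.includeRight :
        ((𝓞 L) ⊗[ℤ] ℤ_[p]) →ₐ[ℤ] ((𝓞 L) ⊗[ℤ] ((𝓞 L) ⊗[ℤ] ℤ_[p])))).toRingHom
  have hact : ∀ (σ : L ≃ₐ[ℚ] L) (t : 𝓞 K) (a : 𝓞 L) (c : ℤ_[p]),
      act σ (t ⊗ₜ (a ⊗ₜ c)) = t ⊗ₜ ((galRestrict ℤ ℚ L (𝓞 L) σ a) ⊗ₜ c) := by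
    intro σ t a c
    simp [act]
  have hactm : ∀ σ : L ≃ₐ[ℚ] L,
      act σ ((m : (𝓞 K) ⊗[ℤ] ((𝓞 L) ⊗[ℤ] ℤ_[p])))
        = ((stmt13Act K L p σ m : ((𝓞 K) ⊗[ℤ] ((𝓞 L) ⊗[ℤ] ℤ_[p]))ˣ) :
            (𝓞 K) ⊗[ℤ] ((𝓞 L) ⊗[ℤ] ℤ_[p])) := fun σ => rfl
  have hj1 : ∀ (t : 𝓞 K) (a : 𝓞 L) (c : ℤ_[p]),
      j1 (t ⊗ₜ (a ⊗ₜ c)) = t ⊗ₜ[ℤ] (a ⊗ₜ[ℤ] ((1 : 𝓞 L) ⊗ₜ[ℤ] c)) := by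
    intro t a c
    simp [j1]
  have hj2 : ∀ (t : 𝓞 K) (a : 𝓞 L) (c : ℤ_[p]),
      j2 (t ⊗ₜ (a ⊗ₜ c)) = t ⊗ₜ[ℤ] ((1 : 𝓞 L) ⊗ₜ[ℤ] (a ⊗ₜ[ℤ] c)) := by
    intro t a c
    simp [j2]
  have hg1 : ∀ a : (𝓞 L) ⊗[ℤ] ℤ_[p], j1 (@algebraMap ((𝓞 L) ⊗[ℤ] ℤ_[p]) ((𝓞 K) ⊗[ℤ] ((𝓞 L) ⊗[ℤ] ℤ_[p])) _ Algebra.TensorProduct.instSemiring _ a)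
      = algebraMap ((𝓞 L) ⊗[ℤ] ((𝓞 L) ⊗[ℤ] ℤ_[p]))
          ((𝓞 K) ⊗[ℤ] ((𝓞 L) ⊗[ℤ] ((𝓞 L) ⊗[ℤ] ℤ_[p]))) (f1 a) := by
    intro a
    show j1 ((1 : 𝓞 K) ⊗ₜ a) = (1 : 𝓞 K) ⊗ₜ (f1 a)
    simp [j1, f1]
  have hg2 : ∀ a : (𝓞 L) ⊗[ℤ] ℤ_[p], j2 (@algebraMap ((𝓞 L) ⊗[ℤ] ℤ_[p]) ((𝓞 K) ⊗[ℤ] ((𝓞 L) ⊗[ℤ] ℤ_[p])) _ Algebra.TensorProduct.instSemiring _ a)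
      = algebraMap ((𝓞 L) ⊗[ℤ] ((𝓞 L) ⊗[ℤ] ℤ_[p]))
          ((𝓞 K) ⊗[ℤ] ((𝓞 L) ⊗[ℤ] ((𝓞 L) ⊗[ℤ] ℤ_[p]))) (f2 a) := by
    intro a
    show j2 ((1 : 𝓞 K) ⊗ₜ a) = (1 : 𝓞 K) ⊗ₜ (f2 a)
    simp [j2, f2]
  have hb1 : ∀ i, j1 (rightBasis ℤ (𝓞 K) _ basK i) = rightBasis ℤ (𝓞 K) _ basK i := by
    intro i
    rw [rightBasis_apply, rightBasis_apply]
    show j1 (basK i ⊗ₜ 1) = basK i ⊗ₜ 1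
    simp [j1, Algebra.TensorProduct.one_def]
  have hb2 : ∀ i, j2 (rightBasis ℤ (𝓞 K) _ basK i) = rightBasis ℤ (𝓞 K) _ basK i := by
    intro i
    rw [rightBasis_apply, rightBasis_apply]
    show j2 (basK i ⊗ₜ 1) = basK i ⊗ₜ 1
    simp [j2, Algebra.TensorProduct.one_def]
  have hminv : Algebra.norm ((𝓞 L) ⊗[ℤ] ℤ_[p])
      ((m⁻¹ : ((𝓞 K) ⊗[ℤ] ((𝓞 L) ⊗[ℤ] ℤ_[p]))ˣ) : (𝓞 K) ⊗[ℤ] ((𝓞 L) ⊗[ℤ] ℤ_[p])) = 1 := by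
    have h := congrArg (Algebra.norm ((𝓞 L) ⊗[ℤ] ℤ_[p])) (Units.mul_inv m)
    rw [map_mul, map_one, hm, one_mul] at h
    exact h
  have hn1 := aux_norm_map f1 j1 hg1
    (rightBasis ℤ (𝓞 K) _ basK) (rightBasis ℤ (𝓞 K) _ basK) hb1
    ((m : (𝓞 K) ⊗[ℤ] ((𝓞 L) ⊗[ℤ] ℤ_[p])))
  have hn2 := aux_norm_map f2 j2 hg2
    (rightBasis ℤ (𝓞 K) _ basK) (rightBasis ℤ (𝓞 K) _ basK) hb2
    ((m⁻¹ : ((𝓞 K) ⊗[ℤ] ((𝓞 L) ⊗[ℤ] ℤ_[p]))ˣ) : (𝓞 K) ⊗[ℤ] ((𝓞 L) ⊗[ℤ] ℤ_[p]))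
  rw [hm, map_one] at hn1
  rw [hminv, map_one] at hn2
  clear_value f1 f2
  let u1 : ((𝓞 K) ⊗[ℤ] ((𝓞 L) ⊗[ℤ] ((𝓞 L) ⊗[ℤ] ℤ_[p])))ˣ := Units.map j1.toMonoidHom m
  let u2 : ((𝓞 K) ⊗[ℤ] ((𝓞 L) ⊗[ℤ] ((𝓞 L) ⊗[ℤ] ℤ_[p])))ˣ := Units.map j2.toMonoidHom m⁻¹
  have hw : ((u1 * u2 : ((𝓞 K) ⊗[ℤ] ((𝓞 L) ⊗[ℤ] ((𝓞 L) ⊗[ℤ] ℤ_[p])))ˣ) :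
        (𝓞 K) ⊗[ℤ] ((𝓞 L) ⊗[ℤ] ((𝓞 L) ⊗[ℤ] ℤ_[p])))
      = j1 ((m : (𝓞 K) ⊗[ℤ] ((𝓞 L) ⊗[ℤ] ℤ_[p])))
        * j2 ((m⁻¹ : ((𝓞 K) ⊗[ℤ] ((𝓞 L) ⊗[ℤ] ℤ_[p]))ˣ) :
            (𝓞 K) ⊗[ℤ] ((𝓞 L) ⊗[ℤ] ℤ_[p])) := rfl
  clear_value j1 j2 act
  refine ⟨u1 * u2, ?_, ?_⟩
  · rw [hw, map_mul]
    exact (congrArg₂ (· * ·) hn1 hn2).trans (one_mul 1)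
  · intro σ
    have hA : ∀ x : (𝓞 K) ⊗[ℤ] ((𝓞 L) ⊗[ℤ] ℤ_[p]),
        Φ (j1 x) σ = act σ x := by
      intro x
      induction x using TensorProduct.induction_on with
      | zero => simp only [map_zero, Pi.zero_apply]
      | add x y hx hy => simp only [map_add, Pi.add_apply, hx, hy]
      | tmul t y =>
        induction y using TensorProduct.induction_on with
        | zero => simp only [TensorProduct.tmul_zero, map_zero, Pi.zero_apply]
        | add y z hy hz =>
            simp only [TensorProduct.tmul_add, map_add, Pi.add_apply, hy, hz]
        | tmul a c =>
            rw [hj1, hΦ, hact]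
            simp only [mul_one]
    have hB : ∀ x : (𝓞 K) ⊗[ℤ] ((𝓞 L) ⊗[ℤ] ℤ_[p]),
        Φ (j2 x) σ = x := by
      intro x
      induction x using TensorProduct.induction_on with
      | zero => simp only [map_zero, Pi.zero_apply]
      | add x y hx hy => simp only [map_add, Pi.add_apply, hx, hy]
      | tmul t y =>
        induction y using TensorProduct.induction_on with
        | zero => simp only [TensorProduct.tmul_zero, map_zero, Pi.zero_apply]
        | add y z hy hz =>
            simp only [TensorProduct.tmul_add, map_add, Pi.add_apply, hy, hz]
        | tmul b c =>
            rw [hj2, hΦ]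
            simp
    rw [hw, map_mul, Pi.mul_apply, hA, hB, Units.val_mul, hactm]
end

section
/- Let K be a quadratic number field of discriminant D with δ = (D+√D)/2, let 𝔞 be a nonzero fractional ideal of K, and let f : 𝔞 × 𝔞 → Z be an antisymmetric Z-bilinear form. Let α, β be a Z-basis of 𝔞 satisfying (ᾱβ − αβ̄)/√D = N(𝔞) > 0 (bar denoting the nontrivial automorphism of K), and let q_𝔞 be the associated integral binary quadratic form, so N_{K/Q}(αx + βy) = N(𝔞)·q_𝔞(x,y) for x,y ∈ Z. Let A be a commutative ring and f_A : (𝔞 ⊗_Z A) × (𝔞 ⊗_Z A) → A the A-bilinear extension of f. Then for every m = α ⊗ x + β ⊗ y ∈ 𝔞 ⊗_Z A with x, y ∈ A, one has f_A(m, m·δ) = q_𝔞(x,y)·f(α,β) in A, where m·δ denotes the action of δ ∈ O_K on 𝔞 ⊗_Z A through the 𝔞 factor. -/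
open NumberField
open scoped TensorProduct

/-!
As `K/ℚ` is quadratic, `N(z) = z σ(z)`, so the coefficients of `q_𝔞` are read off the products
`α σα`, `β σβ`, `α σβ + β σα`. Together with the orientation `σα β - α σβ = N(𝔞) (δ - σδ)`
they pin down the matrix of multiplication by `δ`: if `δα = pα + qβ` and `δβ = rα + tβ`, then
`q = a`, `r = -c`, `t - p = b`. Expanding `F(m, mδ)` by biadditivity and antisymmetry of `f`
gives `(q x² + (t - p) x y - r y²) f(α, β) = q_𝔞(x, y) f(α, β)`.
-/

theorem Algebra.IsQuadraticExtension.algebraMap_norm_eq_mul {F K : Type*} [Field F] [Field K]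
    [Algebra F K] [Algebra.IsQuadraticExtension F K] [Algebra.IsSeparable F K]
    {σ : Gal(K/F)} (hσ : σ ≠ 1) (z : K) :
    algebraMap F K (Algebra.norm F z) = z * σ z := by
  classical
  have : FiniteDimensional F K := Module.finite_of_finrank_eq_succ (finrank_eq_two F K)
  have huniv : (Finset.univ : Finset Gal(K/F)) = {1, σ} := by
    refine (Finset.eq_univ_of_card _ ?_).symm
    rw [Finset.card_pair hσ.symm, ← Nat.card_eq_fintype_card, IsGalois.card_aut_eq_finrank,
      finrank_eq_two]
  rw [Algebra.norm_eq_prod_automorphisms, huniv, Finset.prod_pair hσ.symm, AlgEquiv.one_apply]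

section BinaryForm

variable {K G : Type*} [Field K] [FunLike G K K] [RingHomClass G K K] (σ : G)
  {α β δ n : K} {a b c : ℤ}

theorem coeffs_of_forall_mul_map_eq
    (h : ∀ x y : ℤ, (α * x + β * y) * σ (α * x + β * y) =
      n * ((a * x ^ 2 + b * x * y + c * y ^ 2 : ℤ) : K)) :
    α * σ α = n * a ∧ β * σ β = n * c ∧ α * σ β + β * σ α = n * b := by
  have h10 := h 1 0
  have h01 := h 0 1
  have h11 := h 1 1
  push_cast at h10 h01 h11
  simp only [mul_one, mul_zero, add_zero, zero_add, map_add] at h10 h01 h11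
  refine ⟨by linear_combination h10, by linear_combination h01, ?_⟩
  linear_combination h11 - h10 - h01

/-- Pairing `δα = pα + qβ` with its conjugate gives `(δ - σδ) α σα = q (σα β - α σβ)`, which
the orientation turns into `q = a`; the other entries are isolated in the same way. -/
theorem mulMatrix_eq_of_orientation [CharZero K] {p q r t : ℤ}
    (hA : α * σ α = n * a) (hC : β * σ β = n * c) (hB : α * σ β + β * σ α = n * b)
    (hn : n ≠ 0) (hδ : δ - σ δ ≠ 0) (hor : σ α * β - α * σ β = n * (δ - σ δ))
    (hα : δ * α = p * α + q * β) (hβ : δ * β = r * α + t * β) :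
    q = a ∧ r = -c ∧ t - p = b := by
  have hασ : σ δ * σ α = p * σ α + q * σ β := by simpa using congrArg σ hα
  have hβσ : σ δ * σ β = r * σ α + t * σ β := by simpa using congrArg σ hβ
  have hns : n * (δ - σ δ) ≠ 0 := mul_ne_zero hn hδ
  refine ⟨?_, ?_, ?_⟩ <;> apply Int.cast_injective (α := K) <;> apply mul_left_cancel₀ hns <;>
    push_cast
  · linear_combination -σ α * hα + α * hασ + (δ - σ δ) * hA - q * hor
  · linear_combination σ β * hβ - β * hβσ - (δ - σ δ) * hC - r * hor
  · linear_combination -σ α * hβ + α * hβσ - σ β * hα + β * hασ + (δ - σ δ) * hB + (p - t) * hor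

end BinaryForm

section AlternatingForm

variable {M A : Type*} [AddCommGroup M] [CommRing A] {f : M →ₗ[ℤ] M →ₗ[ℤ] ℤ}

theorem apply_zsmul_add_zsmul_of_antisymm (hf : ∀ v w, f v w = -f w v) (e₀ e₁ : M) (p q : ℤ) :
    f e₀ (p • e₀ + q • e₁) = q * f e₀ e₁ ∧ f e₁ (p • e₀ + q • e₁) = -p * f e₀ e₁ := by
  have hself : ∀ v, f v v = 0 := fun v => by linarith [hf v v]
  simp only [map_add, map_zsmul, smul_eq_mul, hself, hf e₁ e₀]
  constructor <;> ring

theorem tensor_apply_zsmul_add_zsmul_of_antisymm (hf : ∀ v w, f v w = -f w v)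
    {F : M ⊗[ℤ] A → M ⊗[ℤ] A → A}
    (hFl : ∀ m m' n, F (m + m') n = F m n + F m' n)
    (hFr : ∀ m n n', F m (n + n') = F m n + F m n')
    (hFt : ∀ (v w : M) (x y : A), F (v ⊗ₜ x) (w ⊗ₜ y) = (f v w : A) * (x * y))
    (e₀ e₁ : M) (p q r t : ℤ) (x y : A) :
    F (e₀ ⊗ₜ x + e₁ ⊗ₜ y) ((p • e₀ + q • e₁) ⊗ₜ x + (r • e₀ + t • e₁) ⊗ₜ y) =
      (q * x ^ 2 + (t - p) * x * y - r * y ^ 2) * (f e₀ e₁ : A) := by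
  obtain ⟨h₀₀, h₁₀⟩ := apply_zsmul_add_zsmul_of_antisymm hf e₀ e₁ p q
  obtain ⟨h₀₁, h₁₁⟩ := apply_zsmul_add_zsmul_of_antisymm hf e₀ e₁ r t
  rw [hFl, hFr, hFr, hFt, hFt, hFt, hFt, h₀₀, h₁₀, h₀₁, h₁₁]
  push_cast
  ring

end AlternatingForm

theorem stmt_16_general (K : Type) [Field K] [NumberField K] (hK : Module.finrank ℚ K = 2)
    (D : ℤ) (δ : 𝓞 K)
    (σ : K ≃ₐ[ℚ] K) (hsqrt : (2 : K) * (δ : K) - (D : K) ≠ 0)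
    (hσ : σ ((2 : K) * (δ : K) - (D : K)) = -((2 : K) * (δ : K) - (D : K)))
    (𝔞 : FractionalIdeal (nonZeroDivisors (𝓞 K)) K)
    (bas : Module.Basis (Fin 2) ℤ ((𝔞 : Submodule (𝓞 K) K).restrictScalars ℤ))
    (f : ((𝔞 : Submodule (𝓞 K) K).restrictScalars ℤ) →ₗ[ℤ]
      ((𝔞 : Submodule (𝓞 K) K).restrictScalars ℤ) →ₗ[ℤ] ℤ)
    (hf : ∀ v w, f v w = - f w v)
    (hor : σ (bas 0 : K) * (bas 1 : K) - (bas 0 : K) * σ (bas 1 : K) =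
      (FractionalIdeal.absNorm 𝔞 : K) * ((2 : K) * (δ : K) - (D : K)))
    (hpos : 0 < FractionalIdeal.absNorm 𝔞)
    (a b c : ℤ)
    (hq : ∀ x y : ℤ,
      Algebra.norm ℚ (((bas 0 : K)) * (x : K) + ((bas 1 : K)) * (y : K)) =
        FractionalIdeal.absNorm 𝔞 * ((a * x ^ 2 + b * x * y + c * y ^ 2 : ℤ) : ℚ))
    (A : Type) [CommRing A]
    (F : (((𝔞 : Submodule (𝓞 K) K).restrictScalars ℤ) ⊗[ℤ] A) →
      (((𝔞 : Submodule (𝓞 K) K).restrictScalars ℤ) ⊗[ℤ] A) → A)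
    (hFl : ∀ m m' n, F (m + m') n = F m n + F m' n)
    (hFr : ∀ m n n', F m (n + n') = F m n + F m n')
    (hFt : ∀ (v w : ((𝔞 : Submodule (𝓞 K) K).restrictScalars ℤ)) (x y : A),
      F (v ⊗ₜ x) (w ⊗ₜ y) = ((f v w : ℤ) : A) * (x * y))
    (x y : A) :
    F ((bas 0) ⊗ₜ x + (bas 1) ⊗ₜ y) ((δ • bas 0) ⊗ₜ x + (δ • bas 1) ⊗ₜ y) =
      ((a : A) * x ^ 2 + (b : A) * x * y + (c : A) * y ^ 2) *
        ((f (bas 0) (bas 1) : ℤ) : A) := by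
  have : Algebra.IsQuadraticExtension ℚ K := ⟨hK⟩
  have hσ1 : σ ≠ 1 := by
    rintro rfl
    exact hsqrt (CharZero.eq_neg_self_iff.mp hσ)
  have hσδ : (δ : K) - σ δ = 2 * δ - D := by
    simp only [map_sub, map_mul, map_ofNat, map_intCast] at hσ
    linear_combination (-1 / 2 : K) * hσ
  obtain ⟨hA, hC, hB⟩ := coeffs_of_forall_mul_map_eq σ (α := (bas 0 : K)) (β := bas 1)
    (n := FractionalIdeal.absNorm 𝔞) (a := a) (b := b) (c := c) fun x y => by
      rw [← Algebra.IsQuadraticExtension.algebraMap_norm_eq_mul hσ1, hq, map_mul, map_intCast,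
        eq_ratCast (algebraMap ℚ K)]
  have hcoords : ∀ i,
      δ • bas i = bas.repr (δ • bas i) 0 • bas 0 + bas.repr (δ • bas i) 1 • bas 1 := fun i => by
    rw [← Fin.sum_univ_two (fun j => bas.repr (δ • bas i) j • bas j), bas.sum_repr]
  have hcoordsK : ∀ i, (δ : K) * bas i =
      bas.repr (δ • bas i) 0 * (bas 0 : K) + bas.repr (δ • bas i) 1 * (bas 1 : K) := fun i => by
    have h := congrArg Subtype.val (hcoords i)
    push_cast [zsmul_eq_mul] at h
    exact h
  obtain ⟨hqa, hrc, htpb⟩ := mulMatrix_eq_of_orientation σ hA hC hB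
    (Rat.cast_ne_zero.mpr hpos.ne') (hσδ ▸ hsqrt) (hσδ ▸ hor) (hcoordsK 0) (hcoordsK 1)
  rw [hcoords 0, hcoords 1, tensor_apply_zsmul_add_zsmul_of_antisymm hf hFl hFr hFt, hqa, hrc,
    ← htpb]
  push_cast
  ring

/-- Let `K` be a quadratic number field of discriminant `D` with
`𝓞 K = ℤ[δ]`, `δ = (D+√D)/2` (so `√D = 2δ - D`), `𝔞` a nonzero fractional ideal with an
antisymmetric `ℤ`-bilinear form `f : 𝔞 × 𝔞 → ℤ`, and `α = bas 0`, `β = bas 1` a `ℤ`-basis of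
`𝔞` with `(ᾱβ - αβ̄)/√D = N(𝔞) > 0` (the bar being the nontrivial automorphism `σ`), and
`q_𝔞` the associated binary quadratic form.  Then for any commutative ring `A`, the
`A`-bilinear extension `F` of `f` satisfies
`F(m, m·δ) = q_𝔞(x,y)·f(α,β)` for `m = α ⊗ x + β ⊗ y ∈ 𝔞 ⊗[ℤ] A`. -/
theorem stmt_16 (K : Type) [Field K] [NumberField K] (hK : Module.finrank ℚ K = 2)
    (D : ℤ) (hD : NumberField.discr K = D)
    (δ : 𝓞 K) (hδ : ((2 : K) * (δ : K) - (D : K)) ^ 2 = (D : K))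
    (basK : Module.Basis (Fin 2) ℤ (𝓞 K)) (hbK0 : basK 0 = 1) (hbK1 : basK 1 = δ)
    (σ : K ≃ₐ[ℚ] K) (hsqrt : (2 : K) * (δ : K) - (D : K) ≠ 0)
    (hσ : σ ((2 : K) * (δ : K) - (D : K)) = -((2 : K) * (δ : K) - (D : K)))
    (𝔞 : FractionalIdeal (nonZeroDivisors (𝓞 K)) K) (h𝔞 : 𝔞 ≠ 0)
    (bas : Module.Basis (Fin 2) ℤ ((𝔞 : Submodule (𝓞 K) K).restrictScalars ℤ))
    (f : ((𝔞 : Submodule (𝓞 K) K).restrictScalars ℤ) →ₗ[ℤ]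
      ((𝔞 : Submodule (𝓞 K) K).restrictScalars ℤ) →ₗ[ℤ] ℤ)
    (hf : ∀ v w, f v w = - f w v)
    (hor : σ (bas 0 : K) * (bas 1 : K) - (bas 0 : K) * σ (bas 1 : K) =
      (FractionalIdeal.absNorm 𝔞 : K) * ((2 : K) * (δ : K) - (D : K)))
    (hpos : 0 < FractionalIdeal.absNorm 𝔞)
    (a b c : ℤ)
    (hq : ∀ x y : ℤ,
      Algebra.norm ℚ (((bas 0 : K)) * (x : K) + ((bas 1 : K)) * (y : K)) =
        FractionalIdeal.absNorm 𝔞 * ((a * x ^ 2 + b * x * y + c * y ^ 2 : ℤ) : ℚ))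
    (A : Type) [CommRing A]
    (F : (((𝔞 : Submodule (𝓞 K) K).restrictScalars ℤ) ⊗[ℤ] A) →
      (((𝔞 : Submodule (𝓞 K) K).restrictScalars ℤ) ⊗[ℤ] A) → A)
    (hFl : ∀ m m' n, F (m + m') n = F m n + F m' n)
    (hFr : ∀ m n n', F m (n + n') = F m n + F m n')
    (hFt : ∀ (v w : ((𝔞 : Submodule (𝓞 K) K).restrictScalars ℤ)) (x y : A),
      F (v ⊗ₜ x) (w ⊗ₜ y) = ((f v w : ℤ) : A) * (x * y))
    (x y : A) :
    F ((bas 0) ⊗ₜ x + (bas 1) ⊗ₜ y) ((δ • bas 0) ⊗ₜ x + (δ • bas 1) ⊗ₜ y) =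
      ((a : A) * x ^ 2 + (b : A) * x * y + (c : A) * y ^ 2) *
        ((f (bas 0) (bas 1) : ℤ) : A) :=
  stmt_16_general K hK D δ σ hsqrt hσ 𝔞 bas f hf hor hpos a b c hq A F hFl hFr hFt x y
end
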